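/- arXiv:1203.1952 — 9 statements merged into one kernel-verified Lean document; each statement's English description precedes it below -/
import Mathlib

section
/- (AGM fractional cover bound; Theorem 5.1(a)) Let V be a finite set, E a finite family of subsets of V with ⋃_{e∈E} e = V, for each e ∈ E let R_e be a finite relation on attribute set e over a value type D, and let x = (x_e)_{e∈E} be a fractional edge cover of (V,E). Then the natural join J = {t : V → D | t|_e ∈ R_e for every e ∈ E} is finite and |J| ≤ ∏_{e∈E} |R_e|^{x_e}. -/
/-!
We bound, for every finite set `S` of attributes covered by `x` and every finite set `J` of
tuples, the projection `π_S J` by `∏ₑ |π_e J| ^ xₑ`, by induction on `S`. Adding an attribute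
`v` splits `J` by the value `d` at `v`; on a fibre, `v` is constant, so the projection onto
`insert v S` is no larger than the one onto `S`, which is bounded by induction. Edges avoiding
`v` only lose tuples in a fibre, while for the edges through `v` the fibre projections
partition the whole projection, so summing over `d` is Hölder's inequality with the exponents
`xₑ` (`v ∈ e`), whose sum is at least `1` by the cover condition.
-/

open Finset
open scoped ENNReal

theorem ENNReal.sum_rpow_le_rpow_sum {κ : Type*} (t : Finset κ) (f : κ → ℝ≥0∞) {q : ℝ}
    (hq : 1 ≤ q) : ∑ d ∈ t, f d ^ q ≤ (∑ d ∈ t, f d) ^ q := by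
  classical
  induction t using Finset.induction_on with
  | empty => simp
  | insert a t ha ih =>
    rw [sum_insert ha, sum_insert ha]
    exact (add_le_add_right ih _).trans (ENNReal.add_rpow_le_rpow_add _ _ hq)

theorem ENNReal.sum_prod_rpow_le_prod_sum_rpow {ι κ : Type*} (s : Finset ι) (t : Finset κ)
    (f : ι → κ → ℝ≥0∞) {p : ι → ℝ} (hp : ∀ i ∈ s, 0 ≤ p i) (hp1 : ∑ i ∈ s, p i = 1) :
    ∑ d ∈ t, ∏ i ∈ s, f i d ^ p i ≤ ∏ i ∈ s, (∑ d ∈ t, f i d) ^ p i := by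
  let _ : MeasurableSpace t := ⊤
  have h := ENNReal.lintegral_prod_norm_pow_le (μ := MeasureTheory.Measure.count (α := t)) s
    (f := fun i d => f i d)
    (fun i _ => measurable_from_top.aemeasurable) hp1 hp
  simpa only [MeasureTheory.lintegral_count, tsum_fintype, sum_coe_sort,
    sum_coe_sort t (fun d => ∏ i ∈ s, f i d ^ p i)] using h

theorem ENNReal.sum_prod_rpow_le_prod_sum_rpow_of_one_le_sum {ι κ : Type*} (s : Finset ι)
    (t : Finset κ) (f : ι → κ → ℝ≥0∞) {p : ι → ℝ} (hp : ∀ i ∈ s, 0 ≤ p i)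
    (hp1 : 1 ≤ ∑ i ∈ s, p i) :
    ∑ d ∈ t, ∏ i ∈ s, f i d ^ p i ≤ ∏ i ∈ s, (∑ d ∈ t, f i d) ^ p i := by
  set σ := ∑ i ∈ s, p i
  have hσ : 0 < σ := zero_lt_one.trans_le hp1
  have hpσ : ∀ i ∈ s, 0 ≤ p i / σ := fun i hi => div_nonneg (hp i hi) hσ.le
  have hsplit : ∀ a : ℝ≥0∞, ∀ i, a ^ p i = (a ^ σ) ^ (p i / σ) := fun a i => by
    rw [← ENNReal.rpow_mul, mul_div_cancel₀ _ hσ.ne']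
  calc ∑ d ∈ t, ∏ i ∈ s, f i d ^ p i
      = ∑ d ∈ t, ∏ i ∈ s, (f i d ^ σ) ^ (p i / σ) := by simp only [← hsplit]
    _ ≤ ∏ i ∈ s, (∑ d ∈ t, f i d ^ σ) ^ (p i / σ) :=
      sum_prod_rpow_le_prod_sum_rpow s t _ hpσ (by rw [← sum_div, div_self hσ.ne'])
    _ ≤ ∏ i ∈ s, ((∑ d ∈ t, f i d) ^ σ) ^ (p i / σ) :=
      prod_le_prod' fun i hi => rpow_le_rpow (sum_rpow_le_rpow_sum t _ hp1) (hpσ i hi)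
    _ = ∏ i ∈ s, (∑ d ∈ t, f i d) ^ p i := by simp only [← hsplit]

theorem ENNReal.sum_prod_rpow_le_prod_rpow {ι κ : Type*} [Fintype ι] (A : Finset ι)
    (t : Finset κ) {a : ι → κ → ℝ≥0∞} {N : ι → ℝ≥0∞} {x : ι → ℝ} (hx0 : ∀ i, 0 ≤ x i)
    (hA : 1 ≤ ∑ i ∈ A, x i) (hsum : ∀ i ∈ A, ∑ d ∈ t, a i d ≤ N i)
    (hle : ∀ i ∉ A, ∀ d ∈ t, a i d ≤ N i) :
    ∑ d ∈ t, ∏ i, a i d ^ x i ≤ ∏ i, N i ^ x i := by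
  classical
  calc ∑ d ∈ t, ∏ i, a i d ^ x i
      = ∑ d ∈ t, (∏ i ∈ A, a i d ^ x i) * ∏ i ∈ Aᶜ, a i d ^ x i := by
        simp only [prod_mul_prod_compl]
    _ ≤ ∑ d ∈ t, (∏ i ∈ A, a i d ^ x i) * ∏ i ∈ Aᶜ, N i ^ x i := by
        gcongr with d hd i hi
        exacts [hx0 i, hle i (mem_compl.mp hi) d hd]
    _ = (∑ d ∈ t, ∏ i ∈ A, a i d ^ x i) * ∏ i ∈ Aᶜ, N i ^ x i := (sum_mul ..).symm
    _ ≤ (∏ i ∈ A, (∑ d ∈ t, a i d) ^ x i) * ∏ i ∈ Aᶜ, N i ^ x i := by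
        gcongr
        exact sum_prod_rpow_le_prod_sum_rpow_of_one_le_sum _ _ _ (fun i _ => hx0 i) hA
    _ ≤ (∏ i ∈ A, N i ^ x i) * ∏ i ∈ Aᶜ, N i ^ x i := by
        gcongr with i hi
        exacts [hx0 i, hsum i hi]
    _ = ∏ i, N i ^ x i := prod_mul_prod_compl _ _

theorem finite_setOf_forall_restrict_mem {V D ι : Type*} [Finite ι] (e : ι → Finset V)
    (hcover : ∀ v, ∃ i, v ∈ e i) (R : ∀ i, Finset (e i → D)) :
    {t : V → D | ∀ i, (e i).restrict t ∈ R i}.Finite := by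
  have hinj : Function.Injective fun (t : V → D) i => (e i).restrict t := fun t t' h =>
    funext fun v => by
      obtain ⟨i, hi⟩ := hcover v
      exact congrFun (congrFun h i) ⟨v, hi⟩
  exact ((Set.Finite.pi fun i => (R i).finite_toSet).preimage hinj.injOn).subset
    fun t ht => by simpa using ht

section Projection

variable {V D : Type*} [DecidableEq D]

theorem card_image_restrict_eq_sum_card_fiber {s : Finset V} {v : V} (hv : v ∈ s)
    (J : Finset (V → D)) :
    #(J.image s.restrict) = ∑ d ∈ J.image (· v), #((J.filter (· v = d)).image s.restrict) := by
  classical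
  conv_lhs => rw [← J.image_biUnion_filter_eq (· v)]
  rw [biUnion_image, card_biUnion]
  intro d _ d' _ hdd'
  refine disjoint_left.mpr fun r hr hr' => hdd' ?_
  obtain ⟨t, ht, rfl⟩ := mem_image.mp hr
  obtain ⟨t', ht', htt'⟩ := mem_image.mp hr'
  rw [← (mem_filter.mp ht).2, ← (mem_filter.mp ht').2]
  exact (congrFun htt' ⟨v, hv⟩).symm

theorem card_image_restrict_insert_le [DecidableEq V] {s : Finset V} {v : V} {J : Finset (V → D)}
    (hJ : ∀ t ∈ J, ∀ t' ∈ J, t v = t' v) :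
    #(J.image (insert v s).restrict) ≤ #(J.image s.restrict) := by
  refine card_le_card_of_injOn (restrict₂ (π := fun _ => D) (subset_insert v s)) ?_ ?_
  · intro r hr
    obtain ⟨t, ht, rfl⟩ := mem_image.mp hr
    exact mem_image_of_mem _ ht
  · intro r hr r' hr' hrr'
    obtain ⟨t, ht, rfl⟩ := mem_image.mp hr
    obtain ⟨t', ht', rfl⟩ := mem_image.mp hr'
    funext ⟨w, hw⟩
    rcases mem_insert.mp hw with rfl | hw
    · exact hJ t ht t' ht'
    · exact congrFun hrr' ⟨w, hw⟩

theorem card_image_restrict_le_prod_rpow [DecidableEq V] {ι : Type*} [Fintype ι]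
    (e : ι → Finset V) {x : ι → ℝ} (hx0 : ∀ i, 0 ≤ x i) (S : Finset V)
    (hS : ∀ v ∈ S, 1 ≤ ∑ i ∈ univ.filter (fun i => v ∈ e i), x i) (J : Finset (V → D)) :
    (#(J.image S.restrict) : ℝ≥0∞) ≤ ∏ i, (#(J.image (e i).restrict) : ℝ≥0∞) ^ x i := by
  induction S using Finset.induction_on generalizing J with
  | empty =>
    rcases J.eq_empty_or_nonempty with rfl | hJ
    · simp
    calc (#(J.image (∅ : Finset V).restrict) : ℝ≥0∞) ≤ 1 := by
          exact_mod_cast card_le_one_of_subsingleton _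
      _ ≤ ∏ i, (#(J.image (e i).restrict) : ℝ≥0∞) ^ x i := one_le_prod' fun i _ => by
          simpa using ENNReal.rpow_le_rpow (Nat.one_le_cast.mpr (hJ.image _).card_pos) (hx0 i)
  | insert v S hv ih =>
    have hfiber : ∀ d, (#((J.filter (· v = d)).image (insert v S).restrict) : ℝ≥0∞) ≤
        ∏ i, (#((J.filter (· v = d)).image (e i).restrict) : ℝ≥0∞) ^ x i := fun d => by
      refine le_trans (Nat.cast_le.mpr (card_image_restrict_insert_le ?_))
        (ih (fun w hw => hS w (mem_insert_of_mem hw)) _)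
      intro t ht t' ht'
      rw [(mem_filter.mp ht).2, (mem_filter.mp ht').2]
    calc (#(J.image (insert v S).restrict) : ℝ≥0∞)
        = ∑ d ∈ J.image (· v), (#((J.filter (· v = d)).image (insert v S).restrict) : ℝ≥0∞) := by
          rw [card_image_restrict_eq_sum_card_fiber (mem_insert_self v S), Nat.cast_sum]
      _ ≤ ∑ d ∈ J.image (· v),
            ∏ i, (#((J.filter (· v = d)).image (e i).restrict) : ℝ≥0∞) ^ x i :=
          sum_le_sum fun d _ => hfiber d
      _ ≤ ∏ i, (#(J.image (e i).restrict) : ℝ≥0∞) ^ x i := by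
          refine ENNReal.sum_prod_rpow_le_prod_rpow _ _ hx0 (hS v (mem_insert_self v S))
            (fun i hi => ?_) fun i _ d _ => ?_
          · rw [card_image_restrict_eq_sum_card_fiber (mem_filter.mp hi).2 J, Nat.cast_sum]
          · exact Nat.cast_le.mpr (card_le_card (image_subset_image (filter_subset _ _)))

theorem card_le_prod_card_image_restrict_rpow [Fintype V] [DecidableEq V] {ι : Type*}
    [Fintype ι] (e : ι → Finset V) {x : ι → ℝ} (hx0 : ∀ i, 0 ≤ x i)
    (hcover : ∀ v, 1 ≤ ∑ i ∈ univ.filter (fun i => v ∈ e i), x i) (J : Finset (V → D)) :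
    (#J : ℝ) ≤ ∏ i, (#(J.image (e i).restrict) : ℝ) ^ x i := by
  have h := card_image_restrict_le_prod_rpow e hx0 univ (fun v _ => hcover v) J
  rw [card_image_of_injective _ fun t t' h => funext fun v => congrFun h ⟨v, mem_univ v⟩] at h
  have hne_top : ∏ i, (#(J.image (e i).restrict) : ℝ≥0∞) ^ x i ≠ ⊤ :=
    ENNReal.prod_ne_top fun i _ => ENNReal.rpow_ne_top_of_nonneg (hx0 i) (ENNReal.natCast_ne_top _)
  simpa [ENNReal.toReal_prod, ← ENNReal.toReal_rpow] using ENNReal.toReal_mono hne_top h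

end Projection

theorem agm_fractional_cover_bound_general
    {V D : Type*} [Fintype V] [DecidableEq V]
    {ι : Type*} [Fintype ι] (e : ι → Finset V)
    (R : ∀ i, Finset ({v // v ∈ e i} → D))
    (x : ι → ℝ) (hx0 : ∀ i, 0 ≤ x i)
    (hxcover : ∀ v : V, 1 ≤ ∑ i ∈ Finset.univ.filter (fun i => v ∈ e i), x i)
    (J : Set (V → D))
    (hJ : J = {t : V → D | ∀ i, (fun v : {v // v ∈ e i} => t v) ∈ R i}) :
    J.Finite ∧ (Nat.card J : ℝ) ≤ ∏ i, ((R i).card : ℝ) ^ x i := by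
  classical
  have hJR : ∀ t ∈ J, ∀ i, (e i).restrict t ∈ R i := by
    rw [hJ]
    exact fun t ht => ht
  have hunion : ∀ v, ∃ i, v ∈ e i := fun v => by
    by_contra! h
    exact (hxcover v).not_gt (by simp [h])
  have hfin : J.Finite := (finite_setOf_forall_restrict_mem e hunion R).subset hJR
  refine ⟨hfin, ?_⟩
  rw [Nat.card_eq_card_finite_toFinset hfin]
  refine (card_le_prod_card_image_restrict_rpow e hx0 hxcover _).trans
    (prod_le_prod (fun i _ => by positivity) fun i _ => ?_)
  refine Real.rpow_le_rpow (Nat.cast_nonneg _) (Nat.cast_le.mpr (card_le_card ?_)) (hx0 i)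
  exact image_subset_iff.mpr fun t ht => hJR t (hfin.mem_toFinset.mp ht) i

/-- **AGM fractional cover bound** (Theorem 5.1(a)).
Attributes form a finite set `V`, values lie in `D`. `E` is a finite family of
subsets of `V` (indexed by `ι`) whose union is `V`; `R i` is a finite relation
on attribute set `e i`; `x` is a fractional edge cover of the hypergraph.
Then the natural join `J` is finite and `|J| ≤ ∏ i, |R i| ^ (x i)`. -/
theorem agm_fractional_cover_bound
    {V D : Type*} [Fintype V] [DecidableEq V]
    {ι : Type*} [Fintype ι] (e : ι → Finset V)
    (hunion : ∀ v : V, ∃ i, v ∈ e i)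
    (R : ∀ i, Finset ({v // v ∈ e i} → D))
    (x : ι → ℝ) (hx0 : ∀ i, 0 ≤ x i)
    (hxcover : ∀ v : V, 1 ≤ ∑ i ∈ Finset.univ.filter (fun i => v ∈ e i), x i)
    (J : Set (V → D))
    (hJ : J = {t : V → D | ∀ i, (fun v : {v // v ∈ e i} => t v) ∈ R i}) :
    J.Finite ∧ (Nat.card J : ℝ) ≤ ∏ i, ((R i).card : ℝ) ^ x i :=
  agm_fractional_cover_bound_general e R x hx0 hxcover J hJ
end

section
/- (Tight-cover transformation; Lemma 3.2) Let V be a finite set, E a finite indexed family of subsets of V with ⋃_{e∈E} e = V, x = (x_e)_{e∈E} a fractional edge cover of (V,E), and R_e a finite relation on attribute set e for each e ∈ E. Then there exist a finite indexed family E′ of subsets of V, reals x′ = (x′_{e′})_{e′∈E′}, and finite relations R′_{e′} on attribute set e′ for e′ ∈ E′, such that: (a) x′ is a tight fractional cover, i.e. x′_{e′} ≥ 0 for all e′ ∈ E′ and ∑_{e′∈E′ : v∈e′} x′_{e′} = 1 for every v ∈ V; (b) each R′_{e′} is the projection π_{e′}(R_f) of some original relation R_f with e′ ⊆ f, and the natural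 joins coincide: {t : V → D | t|_{e} ∈ R_e ∀e ∈ E} = {t : V → D | t|_{e′} ∈ R′_{e′} ∀e′ ∈ E′}; (c) ∏_{e′∈E′} |R′_{e′}|^{x′_{e′}} ≤ ∏_{e∈E} |R_e|^{x_e}. -/
/-! Put `g v = (∑_{e ∋ v} x_e)⁻¹ ∈ (0, 1]`, list the vertices as `v₁, …, vₙ` by decreasing `g`,
and set `g₀ = 1`, `gₖ = g vₖ`, `gₙ₊₁ = 0`. The prefixes `Sₖ = {v₁, …, vₖ}` with weights
`wₖ = gₖ - gₖ₊₁ ≥ 0` form a discrete layer cake: the weights sum to `1` and the layers containing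
`v` have total weight `g v`. Replacing every edge `e` by the edges `e ∩ Sₖ`, with weights `x_e wₖ`
and relations `π_{e ∩ Sₖ}(R_e)`, covers every vertex with weight `(∑_{e ∋ v} x_e) · g v = 1`;
the join is unchanged because `Sₙ = V` gives back `e` itself, and the AGM bound does not grow
because `|π R| ≤ |R|` and `∑ₖ x_e wₖ = x_e`. That the weights sum to exactly `1` (the empty
layer `S₀` takes the slack) keeps this last step valid when some `R_e` is empty. -/

open Finset

namespace TightCover

variable {V D ι J K : Type*}

theorem exists_equiv_fin_antitone [Fintype V] {α : Type*} [LinearOrder α] (g : V → α) :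
    ∃ (n : ℕ) (σ : Fin n ≃ V), Antitone (g ∘ σ) := by
  let τ := (Fintype.equivFin V).symm
  let f : Fin (Fintype.card V) → αᵒᵈ := OrderDual.toDual ∘ g ∘ τ
  exact ⟨_, (Tuple.sort f).trans τ, fun _ _ h => Tuple.monotone_sort f h⟩

def coverage [DecidableEq V] [Fintype ι] (e : ι → Finset V) (x : ι → ℝ) (v : V) : ℝ :=
  ∑ i ∈ univ.filter (fun i => v ∈ e i), x i

section Coverage

variable [DecidableEq V]

theorem coverage_comp_equiv [Fintype J] [Fintype K] (e : J → Finset V) (x : J → ℝ) (σ : K ≃ J)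
    (v : V) : coverage (e ∘ σ) (x ∘ σ) v = coverage e x v := by
  simp only [coverage, sum_filter]
  exact σ.sum_comp fun j => if v ∈ e j then x j else 0

theorem coverage_inter_prod [Fintype ι] [Fintype K] (e : ι → Finset V) (x : ι → ℝ)
    (S : K → Finset V) (w : K → ℝ) (v : V) :
    coverage (fun j : ι × K => e j.1 ∩ S j.2) (fun j => x j.1 * w j.2) v =
      coverage e x v * coverage S w v := by
  simp only [coverage, sum_filter, mem_inter, ite_and, Fintype.sum_prod_type, sum_mul_sum,
    ite_zero_mul_ite_zero]

theorem exists_layer_decomposition [Fintype V] (g : V → ℝ) (hg0 : ∀ v, 0 ≤ g v)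
    (hg1 : ∀ v, g v ≤ 1) :
    ∃ (m : ℕ) (S : Fin m → Finset V) (w : Fin m → ℝ), (∀ k, 0 ≤ w k) ∧ ∑ k, w k = 1 ∧
      (∀ v, coverage S w v = g v) ∧ ∃ k, S k = univ := by
  obtain ⟨n, σ, hσ⟩ := exists_equiv_fin_antitone g
  let a : ℕ → ℝ := fun j => if h : j < n then g (σ ⟨j, h⟩) else 0
  let level : ℕ → ℝ := fun j => if j = 0 then 1 else a (j - 1)
  have ha : Antitone a := by
    intro j j' hj
    simp only [a]
    split_ifs with h' h
    · exact hσ (Fin.mk_le_mk.2 hj)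
    · omega
    · exact hg0 _
    · exact le_rfl
  have hlevel : Antitone level := by
    intro j j' hj
    simp only [level]
    split_ifs with h' h
    · exact le_rfl
    · omega
    · simp only [a]; split_ifs <;> simp [hg1]
    · exact ha (by omega)
  have htelescope : ∀ j ≤ n + 1, ∑ k ∈ Ico j (n + 1), (level k - level (k + 1)) = level j := by
    intro j hj
    have hend : level (n + 1) = 0 := by simp [level, a]
    rw [← neg_inj, ← sum_neg_distrib]
    simp only [neg_sub]
    rw [sum_Ico_sub level hj, hend, zero_sub]
  refine ⟨n + 1, fun k => univ.filter (fun v => (σ.symm v : ℕ) < k),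
    fun k => level k - level (k + 1), fun k => sub_nonneg.2 (hlevel k.val.le_succ), ?_, ?_,
    ⟨Fin.last n, by ext v; simp⟩⟩
  · rw [Fin.sum_univ_eq_sum_range (fun k => level k - level (k + 1)), range_eq_Ico,
      htelescope 0 (by omega)]
    rfl
  · intro v
    have hIco : (range (n + 1)).filter (fun k => (σ.symm v : ℕ) < k) =
        Ico ((σ.symm v : ℕ) + 1) (n + 1) := by
      ext k; simp only [mem_filter, mem_range, mem_Ico]; omega
    rw [coverage, sum_filter]
    simp only [mem_filter, mem_univ, true_and]
    rw [Fin.sum_univ_eq_sum_range (fun k => if (σ.symm v : ℕ) < k then level k - level (k + 1)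
      else 0), ← sum_filter, hIco, htelescope _ (by omega)]
    simp [level, a]

end Coverage

def project [DecidableEq D] {s t : Finset V} (h : s ⊆ t) (R : Finset (t → D)) :
    Finset (s → D) :=
  R.image (restrict₂ (π := fun _ => D) h)

def naturalJoin (e : ι → Finset V) (R : ∀ i, Finset (e i → D)) : Set (V → D) :=
  {t | ∀ i, (e i).restrict t ∈ R i}

theorem naturalJoin_eq_naturalJoin_project [DecidableEq D] (e : ι → Finset V)
    (R : ∀ i, Finset (e i → D)) (e' : J → Finset V) (idx : J → ι)
    (hsub : ∀ j, e' j ⊆ e (idx j)) (hfull : ∀ i, ∃ j, idx j = i ∧ e i ⊆ e' j) :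
    naturalJoin e R = naturalJoin e' fun j => project (hsub j) (R (idx j)) := by
  ext t
  refine ⟨fun ht j => mem_image_of_mem _ (ht (idx j)), fun ht i => ?_⟩
  obtain ⟨j, rfl, hj⟩ := hfull i
  obtain ⟨r, hr, hrt⟩ := mem_image.1 (ht j)
  convert hr using 1
  funext u
  exact (congrFun hrt ⟨u, hj u.2⟩).symm

theorem prod_rpow_le_rpow_sum {s : Finset K} {b a : K → ℝ} {B : ℝ} (hB : 0 ≤ B)
    (hb0 : ∀ k ∈ s, 0 ≤ b k) (hbB : ∀ k ∈ s, b k ≤ B) (ha : ∀ k ∈ s, 0 ≤ a k) :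
    ∏ k ∈ s, b k ^ a k ≤ B ^ ∑ k ∈ s, a k := by
  rw [Real.rpow_sum_of_nonneg hB ha]
  exact prod_le_prod (fun k hk => Real.rpow_nonneg (hb0 k hk) _)
    fun k hk => Real.rpow_le_rpow (hb0 k hk) (hbB k hk) (ha k hk)

noncomputable def agmBound [Fintype ι] {e : ι → Finset V} (R : ∀ i, Finset (e i → D))
    (x : ι → ℝ) : ℝ :=
  ∏ i, ((R i).card : ℝ) ^ x i

theorem agmBound_comp_equiv [Fintype J] [Fintype K] {e : J → Finset V}
    (R : ∀ j, Finset (e j → D)) (x : J → ℝ) (σ : K ≃ J) :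
    agmBound (e := e ∘ σ) (fun k => R (σ k)) (x ∘ σ) = agmBound R x :=
  σ.prod_comp fun j => ((R j).card : ℝ) ^ x j

theorem agmBound_project_inter_le [DecidableEq V] [DecidableEq D] [Fintype ι] [Fintype K]
    {e : ι → Finset V} (R : ∀ i, Finset (e i → D)) {x : ι → ℝ} (hx0 : ∀ i, 0 ≤ x i)
    (S : K → Finset V) {w : K → ℝ} (hw0 : ∀ k, 0 ≤ w k) (hw1 : ∑ k, w k = 1) :
    agmBound (fun j : ι × K => project (inter_subset_left (s₂ := S j.2)) (R j.1))
      (fun j => x j.1 * w j.2) ≤ agmBound R x := by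
  unfold agmBound
  rw [Fintype.prod_prod_type]
  gcongr with i
  calc ∏ k, ((project inter_subset_left (R i)).card : ℝ) ^ (x i * w k)
      ≤ ((R i).card : ℝ) ^ ∑ k, x i * w k :=
        prod_rpow_le_rpow_sum (Nat.cast_nonneg _) (fun _ _ => Nat.cast_nonneg _)
          (fun _ _ => Nat.cast_le.2 card_image_le) fun k _ => mul_nonneg (hx0 i) (hw0 k)
    _ = ((R i).card : ℝ) ^ x i := by rw [← mul_sum, hw1, mul_one]

def IsTightCoverTransform [DecidableEq V] [DecidableEq D] [Fintype ι] [Fintype J]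
    (e : ι → Finset V) (x : ι → ℝ) (R : ∀ i, Finset (e i → D))
    (e' : J → Finset V) (x' : J → ℝ) (R' : ∀ j, Finset (e' j → D)) : Prop :=
  (∀ j, 0 ≤ x' j) ∧ (∀ v, coverage e' x' v = 1) ∧
    (∀ j, ∃ (i : ι) (h : e' j ⊆ e i), R' j = project h (R i)) ∧
    naturalJoin e R = naturalJoin e' R' ∧ agmBound R' x' ≤ agmBound R x

section Transform

variable [DecidableEq V] [DecidableEq D] [Fintype ι] [Fintype J] [Fintype K]
  {e : ι → Finset V} {x : ι → ℝ} {R : ∀ i, Finset (e i → D)}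

theorem IsTightCoverTransform.comp_equiv {e' : J → Finset V} {x' : J → ℝ}
    {R' : ∀ j, Finset (e' j → D)} (h : IsTightCoverTransform e x R e' x' R') (σ : K ≃ J) :
    IsTightCoverTransform e x R (e' ∘ σ) (x' ∘ σ) fun k => R' (σ k) := by
  obtain ⟨hx0, htight, hproj, hjoin, hagm⟩ := h
  refine ⟨fun k => hx0 (σ k), fun v => (coverage_comp_equiv e' x' σ v).trans (htight v),
    fun k => hproj (σ k), ?_, (agmBound_comp_equiv R' x' σ).trans_le hagm⟩
  rw [hjoin]
  ext t
  exact σ.forall_congr_right.symm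

theorem isTightCoverTransform_inter_layers [Fintype V] (hx0 : ∀ i, 0 ≤ x i)
    (S : K → Finset V) {w : K → ℝ} (hw0 : ∀ k, 0 ≤ w k) (hw1 : ∑ k, w k = 1)
    (hSw : ∀ v, coverage e x v * coverage S w v = 1)
    (hS : ∃ k, S k = univ) :
    IsTightCoverTransform e x R (fun j : ι × K => e j.1 ∩ S j.2) (fun j => x j.1 * w j.2)
      fun j => project inter_subset_left (R j.1) := by
  obtain ⟨k₀, hk₀⟩ := hS
  refine ⟨fun j => mul_nonneg (hx0 j.1) (hw0 j.2), fun v => ?_, fun j => ⟨j.1, _, rfl⟩,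
    naturalJoin_eq_naturalJoin_project e R _ Prod.fst (fun _ => inter_subset_left)
      fun i => ⟨(i, k₀), rfl, by rw [hk₀, inter_univ]⟩,
    agmBound_project_inter_le R hx0 S hw0 hw1⟩
  rw [coverage_inter_prod, hSw]

end Transform

end TightCover

open TightCover in
theorem tight_cover_transformation_general
    {V D : Type*} [Fintype V] [DecidableEq V] [DecidableEq D]
    {ι : Type*} [Fintype ι] (e : ι → Finset V)
    (x : ι → ℝ) (hx0 : ∀ i, 0 ≤ x i)
    (hxcover : ∀ v : V, 1 ≤ ∑ i ∈ Finset.univ.filter (fun i => v ∈ e i), x i)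
    (R : ∀ i, Finset ({v // v ∈ e i} → D)) :
    ∃ (k : ℕ) (e' : Fin k → Finset V) (x' : Fin k → ℝ)
      (R' : ∀ j, Finset ({v // v ∈ e' j} → D)),
      -- (a) tight fractional cover
      (∀ j, 0 ≤ x' j) ∧
      (∀ v : V, ∑ j ∈ Finset.univ.filter (fun j => v ∈ e' j), x' j = 1) ∧
      -- (b) each new relation is a projection of an original one …
      (∀ j, ∃ (i : ι) (hsub : e' j ⊆ e i),
        R' j = (R i).image (fun t => fun v : {v // v ∈ e' j} => t ⟨v.1, hsub v.2⟩)) ∧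
      -- … and the natural joins coincide
      ({t : V → D | ∀ i, (fun v : {v // v ∈ e i} => t v) ∈ R i}
        = {t : V → D | ∀ j, (fun v : {v // v ∈ e' j} => t v) ∈ R' j}) ∧
      -- (c) the AGM bound does not increase
      ∏ j, ((R' j).card : ℝ) ^ x' j ≤ ∏ i, ((R i).card : ℝ) ^ x i := by
  have hcov_pos v : 0 < coverage e x v := one_pos.trans_le (hxcover v)
  obtain ⟨m, S, w, hw0, hw1, hSw, hS⟩ := exists_layer_decomposition (fun v => (coverage e x v)⁻¹)
    (fun v => (inv_pos.2 (hcov_pos v)).le) fun v => inv_le_one_of_one_le₀ (hxcover v)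
  have h := isTightCoverTransform_inter_layers (R := R) hx0 S hw0 hw1
    (fun v => by rw [hSw, mul_inv_cancel₀ (hcov_pos v).ne']) hS
  exact ⟨_, _, _, _, h.comp_equiv (Fintype.equivFin _).symm⟩

/-- **Tight-cover transformation** (Lemma 3.2).
Given a hypergraph `(V, E)` (edges indexed by `ι`, covering `V`), a fractional
edge cover `x`, and finite relations `R i` on attribute sets `e i`, there is a
finite family `e'` of subsets of `V` (indexed by `Fin k`), reals `x'`, and
finite relations `R'` such that: (a) `x'` is a tight fractional cover;
(b) each `R' j` is the projection `π_{e' j}(R i)` of some original relation with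
`e' j ⊆ e i`, and the natural joins coincide; (c) the AGM bound does not
increase. -/
theorem tight_cover_transformation
    {V D : Type*} [Fintype V] [DecidableEq V] [DecidableEq D]
    {ι : Type*} [Fintype ι] (e : ι → Finset V)
    (hunion : ∀ v : V, ∃ i, v ∈ e i)
    (x : ι → ℝ) (hx0 : ∀ i, 0 ≤ x i)
    (hxcover : ∀ v : V, 1 ≤ ∑ i ∈ Finset.univ.filter (fun i => v ∈ e i), x i)
    (R : ∀ i, Finset ({v // v ∈ e i} → D)) :
    ∃ (k : ℕ) (e' : Fin k → Finset V) (x' : Fin k → ℝ)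
      (R' : ∀ j, Finset ({v // v ∈ e' j} → D)),
      -- (a) tight fractional cover
      (∀ j, 0 ≤ x' j) ∧
      (∀ v : V, ∑ j ∈ Finset.univ.filter (fun j => v ∈ e' j), x' j = 1) ∧
      -- (b) each new relation is a projection of an original one …
      (∀ j, ∃ (i : ι) (hsub : e' j ⊆ e i),
        R' j = (R i).image (fun t => fun v : {v // v ∈ e' j} => t ⟨v.1, hsub v.2⟩)) ∧
      -- … and the natural joins coincide
      ({t : V → D | ∀ i, (fun v : {v // v ∈ e i} => t v) ∈ R i}
        = {t : V → D | ∀ j, (fun v : {v // v ∈ e' j} => t v) ∈ R' j}) ∧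
      -- (c) the AGM bound does not increase
      ∏ j, ((R' j).card : ℝ) ^ x' j ≤ ∏ i, ((R i).card : ℝ) ^ x i :=
  tight_cover_transformation_general e x hx0 hxcover R
end

section
/- (Section-sum inequality, the key step in the proof of Lemma 5.5) Let V be a finite set of attributes, v ∈ V, and let e_1, …, e_k ⊆ V with v ∈ e_i for all i. Let R_1, …, R_k be finite relations on attribute sets e_1, …, e_k respectively, and let x_1, …, x_k ≥ 0 be reals with x_1 + ⋯ + x_k ≥ 1. For a value a ∈ D, let R_i[a] = { t|_{e_i∖{v}} : t ∈ R_i, t(v) = a } be the a-section of R_i. Then ∑_{a ∈ ⋃_i π_{{v}}(R_i)} ∏_{i=1}^k |R_i[a]|^{x_i} ≤ ∏_{i=1}^k |R_i|^{x_i}. -/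
/-!
Grouping the tuples of `R i` by their `v`-value, `|R i|` is the sum over `a` of the fibre sizes,
and restriction to `e i ∖ {v}` is injective on each fibre, so `|R i [a]|` is the fibre size.
The inequality is then Hölder's inequality for `k` functions, `∑ₐ ∏ᵢ fᵢ(a)^{wᵢ} ≤ ∏ᵢ (∑ₐ fᵢ(a))^{wᵢ}`
when `∑ wᵢ = 1`, which follows from weighted AM-GM applied to the normalised values
`fᵢ(a) / ∑ₐ fᵢ(a)`. Exponents with `∑ xᵢ ≥ 1` reduce to this case by splitting off
`wᵢ = xᵢ / ∑ xⱼ` and bounding `fᵢ(a)^{xᵢ - wᵢ} ≤ (∑ₐ fᵢ(a))^{xᵢ - wᵢ}`.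
-/

open Finset

namespace Real

variable {ι α : Type*} (s : Finset ι) (A : Finset α) {f : ι → α → ℝ}

theorem sum_prod_rpow_le_prod_sum_rpow_of_sum_eq_one (hf : ∀ i ∈ s, ∀ a ∈ A, 0 ≤ f i a)
    {w : ι → ℝ} (hw : ∀ i ∈ s, 0 ≤ w i) (hw1 : ∑ i ∈ s, w i = 1) :
    ∑ a ∈ A, ∏ i ∈ s, f i a ^ w i ≤ ∏ i ∈ s, (∑ a ∈ A, f i a) ^ w i := by
  set S : ι → ℝ := fun i => ∑ a ∈ A, f i a
  have hS : ∀ i ∈ s, 0 ≤ S i := fun i hi => sum_nonneg (hf i hi)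
  have hfS : ∀ i ∈ s, ∀ a ∈ A, f i a ≤ S i := fun i hi a ha =>
    single_le_sum (hf i hi) ha
  have hSprod : 0 ≤ ∏ i ∈ s, S i ^ w i := prod_nonneg fun i hi => rpow_nonneg (hS i hi) _
  -- `S i = 0` forces `f i = 0` on `A`, so the junk value `f i a / 0 = 0` is harmless here.
  have pointwise : ∀ a ∈ A,
      ∏ i ∈ s, f i a ^ w i ≤ (∑ i ∈ s, w i * (f i a / S i)) * ∏ i ∈ s, S i ^ w i := by
    intro a ha
    have hnorm : ∏ i ∈ s, f i a ^ w i = (∏ i ∈ s, (f i a / S i) ^ w i) * ∏ i ∈ s, S i ^ w i := by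
      rw [← prod_mul_distrib]
      refine prod_congr rfl fun i hi => ?_
      rw [← mul_rpow (div_nonneg (hf i hi a ha) (hS i hi)) (hS i hi),
        div_mul_cancel_of_imp fun h => le_antisymm (h ▸ hfS i hi a ha) (hf i hi a ha)]
    rw [hnorm]
    gcongr
    exact geom_mean_le_arith_mean_weighted s w _ hw hw1
      fun i hi => div_nonneg (hf i hi a ha) (hS i hi)
  calc ∑ a ∈ A, ∏ i ∈ s, f i a ^ w i
      ≤ ∑ a ∈ A, (∑ i ∈ s, w i * (f i a / S i)) * ∏ i ∈ s, S i ^ w i := sum_le_sum pointwise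
    _ = (∑ i ∈ s, w i * (S i / S i)) * ∏ i ∈ s, S i ^ w i := by
      simp_rw [← sum_mul, S, sum_div, mul_sum]
      rw [sum_comm]
    _ ≤ ∏ i ∈ s, S i ^ w i := by
      refine mul_le_of_le_one_left hSprod ?_
      calc ∑ i ∈ s, w i * (S i / S i) ≤ ∑ i ∈ s, w i :=
            sum_le_sum fun i hi => mul_le_of_le_one_right (hw i hi) (div_self_le_one _)
        _ = 1 := hw1

theorem sum_prod_rpow_le_prod_sum_rpow (hf : ∀ i ∈ s, ∀ a ∈ A, 0 ≤ f i a)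
    {x : ι → ℝ} (hx : ∀ i ∈ s, 0 ≤ x i) (hx1 : 1 ≤ ∑ i ∈ s, x i) :
    ∑ a ∈ A, ∏ i ∈ s, f i a ^ x i ≤ ∏ i ∈ s, (∑ a ∈ A, f i a) ^ x i := by
  set X := ∑ i ∈ s, x i
  have hX : 0 < X := one_pos.trans_le hx1
  set w : ι → ℝ := fun i => x i / X
  have hw : ∀ i ∈ s, 0 ≤ w i := fun i hi => div_nonneg (hx i hi) hX.le
  have hw1 : ∑ i ∈ s, w i = 1 := by rw [← sum_div, div_self hX.ne']
  have hwx : ∀ i ∈ s, 0 ≤ x i - w i := fun i hi => sub_nonneg.2 (div_le_self (hx i hi) hx1)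
  have hsplit : ∀ i ∈ s, ∀ t : ℝ, 0 ≤ t → t ^ x i = t ^ w i * t ^ (x i - w i) := fun i hi t ht => by
    rw [← rpow_add_of_nonneg ht (hw i hi) (hwx i hi), add_sub_cancel]
  have hS : ∀ i ∈ s, 0 ≤ ∑ a ∈ A, f i a := fun i hi => sum_nonneg (hf i hi)
  calc ∑ a ∈ A, ∏ i ∈ s, f i a ^ x i
      ≤ ∑ a ∈ A, (∏ i ∈ s, f i a ^ w i) * ∏ i ∈ s, (∑ b ∈ A, f i b) ^ (x i - w i) := by
        refine sum_le_sum fun a ha => ?_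
        rw [← prod_mul_distrib]
        refine prod_le_prod (fun i hi => rpow_nonneg (hf i hi a ha) _) fun i hi => ?_
        rw [hsplit i hi _ (hf i hi a ha)]
        exact mul_le_mul_of_nonneg_left
          (rpow_le_rpow (hf i hi a ha) (single_le_sum (hf i hi) ha) (hwx i hi))
          (rpow_nonneg (hf i hi a ha) _)
    _ ≤ (∏ i ∈ s, (∑ a ∈ A, f i a) ^ w i) * ∏ i ∈ s, (∑ b ∈ A, f i b) ^ (x i - w i) := by
        rw [← sum_mul]
        gcongr
        · exact prod_nonneg fun i hi => rpow_nonneg (hS i hi) _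
        · exact sum_prod_rpow_le_prod_sum_rpow_of_sum_eq_one s A hf hw hw1
    _ = ∏ i ∈ s, (∑ a ∈ A, f i a) ^ x i := by
        rw [← prod_mul_distrib]
        exact prod_congr rfl fun i hi => (hsplit i hi _ (hS i hi)).symm

end Real

theorem card_restrict_filter_eq_card_filter {V D : Type*} [DecidableEq V] [DecidableEq D]
    {e : Finset V} {v : V} (hv : v ∈ e) (R : Finset ({u // u ∈ e} → D)) (a : D) :
    ((R.filter (fun t => t ⟨v, hv⟩ = a)).image
        (fun t => fun u : {u // u ∈ e \ {v}} => t ⟨u.1, (mem_sdiff.mp u.2).1⟩)).card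
      = (R.filter (fun t => t ⟨v, hv⟩ = a)).card := by
  refine card_image_of_injOn fun t ht t' ht' h => funext fun u => ?_
  by_cases hu : u.1 = v
  · obtain rfl : u = ⟨v, hv⟩ := Subtype.ext hu
    rw [(mem_filter.mp ht).2, (mem_filter.mp ht').2]
  · exact congrFun h ⟨u.1, mem_sdiff.mpr ⟨u.2, by simpa using hu⟩⟩

/-- **Section-sum inequality** (key step in the proof of Lemma 5.5).
`v` is an attribute contained in each attribute set `e i`; `R i` is a finite
relation on `e i`; `x i ≥ 0` with `∑ i, x i ≥ 1`.  For a value `a`, the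
`a`-section `R i [a]` is the set of restrictions to `e i ∖ {v}` of tuples of
`R i` whose `v`-coordinate equals `a`.  Summing over all values `a` occurring
in some projection `π_{{v}}(R i)`,
`∑_a ∏ i |R i [a]| ^ (x i) ≤ ∏ i |R i| ^ (x i)`
(real powers; `0 ^ y = 0` for `y > 0`). -/
theorem section_sum_inequality
    {V D : Type*} [DecidableEq V] [DecidableEq D]
    {k : ℕ} (v : V) (e : Fin k → Finset V) (hv : ∀ i, v ∈ e i)
    (R : ∀ i, Finset ({u // u ∈ e i} → D))
    (x : Fin k → ℝ) (hx0 : ∀ i, 0 ≤ x i) (hxsum : 1 ≤ ∑ i, x i) :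
    ∑ a ∈ Finset.univ.biUnion (fun i : Fin k => (R i).image (fun t => t ⟨v, hv i⟩)),
      ∏ i, ((((R i).filter (fun t => t ⟨v, hv i⟩ = a)).image
          (fun t => fun u : {u // u ∈ e i \ {v}} =>
            t ⟨u.1, (Finset.mem_sdiff.mp u.2).1⟩)).card : ℝ) ^ x i
    ≤ ∏ i, ((R i).card : ℝ) ^ x i := by
  simp_rw [card_restrict_filter_eq_card_filter]
  refine (Real.sum_prod_rpow_le_prod_sum_rpow _ _ (fun _ _ _ _ => Nat.cast_nonneg _)
    (fun i _ => hx0 i) hxsum).trans_eq (prod_congr rfl fun i _ => ?_)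
  rw [← Nat.cast_sum, ← card_eq_sum_card_fiberwise fun t ht =>
    mem_biUnion.mpr ⟨i, mem_univ i, mem_image_of_mem _ ht⟩]
end

section
/- (Heavy/light decomposition for the triangle query; Example 4.2) Let A, B, C be types, let R ⊆ A×B, S ⊆ B×C, T ⊆ A×C be finite relations, and let τ > 0 be a real number. For b ∈ B write R[b] = {a ∈ A : (a,b) ∈ R} and S[b] = {c ∈ C : (b,c) ∈ S}. Define D = { b ∈ B : |R[b]| > τ } (the heavy join keys) and G = { (a,b) ∈ R : b ∉ D }. Let J = { (a,b,c) : (a,b) ∈ R, (b,c) ∈ S, (a,c) ∈ T }. Then: (i) J ⊆ X ∪ Y where X = { (a,b,c) : b ∈ D, (a,c) ∈ T } and Y = { (a,b,c) : (a,b) ∈ G, (b,c) ∈ S }, and X and Y are disjoint; (ii) |D| ≤ |R|/τ, hence |X| ≤ |R|·|T|/τ; (iii) |Y| ≤ τ·|S|; consequently |J| ≤ |R|·|T|/τ + τ·|S|. -/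
/-!
A heavy key `b` carries more than `τ` tuples of `R`, and these fibres are disjoint, so there
are at most `|R|/τ` heavy keys; pairing them with `T` bounds the heavy part `X`. A light key
carries at most `τ` tuples of `R`, so every tuple of `S` extends to at most `τ` tuples of the
light join `Y`. Every triangle has either a heavy or a light middle key, whence `J ⊆ X ∪ Y`.
-/

open Finset

namespace Finset

variable {α β : Type*}

theorem mul_card_le_card_of_le_card_fiber [DecidableEq β] {f : α → β} {s : Finset α}
    {t : Finset β} {τ : ℝ} (h : ∀ b ∈ t, τ ≤ #{a ∈ s | f a = b}) : τ * #t ≤ #s :=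
  calc τ * #t = ∑ _b ∈ t, τ := by rw [sum_const, nsmul_eq_mul, mul_comm]
    _ ≤ ∑ b ∈ t, (#{a ∈ s | f a = b} : ℝ) := sum_le_sum h
    _ = #{a ∈ s | f a ∈ t} := by rw [← Nat.cast_sum, sum_card_fiberwise_eq_card_filter]
    _ ≤ #s := by exact_mod_cast card_filter_le s _

theorem card_le_mul_card_of_card_fiber_le [DecidableEq β] {f : α → β} {s : Finset α}
    {t : Finset β} {τ : ℝ} (hf : ∀ a ∈ s, f a ∈ t) (h : ∀ b ∈ t, #{a ∈ s | f a = b} ≤ τ) :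
    #s ≤ τ * #t :=
  calc (#s : ℝ) = ∑ b ∈ t, (#{a ∈ s | f a = b} : ℝ) := by
        rw [← Nat.cast_sum, ← card_eq_sum_card_fiberwise hf]
    _ ≤ ∑ _b ∈ t, τ := sum_le_sum h
    _ = τ * #t := by rw [sum_const, nsmul_eq_mul, mul_comm]

end Finset

theorem Set.natCard_le_add_of_subset_union {α : Type*} {s t u : Set α} (ht : t.Finite)
    (hu : u.Finite) (h : s ⊆ t ∪ u) : Nat.card s ≤ Nat.card t + Nat.card u := by
  simp only [Nat.card_coe_set_eq]
  exact (Set.ncard_le_ncard h (ht.union hu)).trans (Set.ncard_union_le t u)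

namespace Relation

variable {A B C : Type*} [DecidableEq B]

theorem ncard_setOf_mem_eq_card_filter (R : Finset (A × B)) (b : B) :
    {a : A | (a, b) ∈ R}.ncard = #{p ∈ R | p.2 = b} := by
  rw [← Set.ncard_image_of_injective _ (Prod.mk_left_injective b), ← Set.ncard_coe_finset]
  congr 1
  ext ⟨a, b'⟩
  simp only [Set.mem_image, Set.mem_ofPred_eq, Prod.mk.injEq, coe_filter]
  constructor
  · rintro ⟨a, h, rfl, rfl⟩
    exact ⟨h, rfl⟩
  · rintro ⟨h, rfl⟩
    exact ⟨a, h, rfl, rfl⟩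

noncomputable def heavyKeys (R : Finset (A × B)) (τ : ℝ) : Finset B :=
  {b ∈ R.image Prod.snd | τ < #{p ∈ R | p.2 = b}}

theorem mem_heavyKeys {R : Finset (A × B)} {τ : ℝ} (hτ : 0 ≤ τ) {b : B} :
    b ∈ heavyKeys R τ ↔ τ < #{p ∈ R | p.2 = b} := by
  refine ⟨fun hb => (mem_filter.1 hb).2, fun hlt => mem_filter.2 ⟨?_, hlt⟩⟩
  obtain ⟨p, hp⟩ := card_pos.1 (by exact_mod_cast hτ.trans_lt hlt)
  exact mem_image.2 ⟨p, (mem_filter.1 hp).1, (mem_filter.1 hp).2⟩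

theorem setOf_heavy_eq_coe_heavyKeys (R : Finset (A × B)) {τ : ℝ} (hτ : 0 ≤ τ) :
    {b : B | τ < (Nat.card {a : A | (a, b) ∈ R} : ℝ)} = heavyKeys R τ := by
  ext b
  rw [Set.mem_ofPred_eq, Nat.card_coe_set_eq, ncard_setOf_mem_eq_card_filter, mem_coe,
    mem_heavyKeys hτ]

theorem mul_card_heavyKeys_le (R : Finset (A × B)) (τ : ℝ) : τ * #(heavyKeys R τ) ≤ #R :=
  mul_card_le_card_of_le_card_fiber fun _ hb => (mem_filter.1 hb).2.le

theorem card_filter_notMem_heavyKeys_fiber_le (R : Finset (A × B)) {τ : ℝ} (hτ : 0 ≤ τ)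
    (b : B) : #{p ∈ {p ∈ R | p.2 ∉ heavyKeys R τ} | p.2 = b} ≤ τ := by
  rw [filter_filter]
  by_cases hb : b ∈ heavyKeys R τ
  · rw [filter_false_of_mem fun p _ ⟨hp, hpb⟩ => hp (hpb ▸ hb)]
    simpa using hτ
  · rw [filter_congr fun p _ => and_iff_right_of_imp fun hpb => hpb ▸ hb]
    exact not_lt.1 fun hlt => hb ((mem_heavyKeys hτ).2 hlt)

variable [DecidableEq A] [DecidableEq C]

def join (R : Finset (A × B)) (S : Finset (B × C)) : Finset (A × B × C) :=
  {q ∈ R ×ˢ S | q.1.2 = q.2.1}.image fun q => (q.1.1, q.1.2, q.2.2)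

theorem mem_join {R : Finset (A × B)} {S : Finset (B × C)} {p : A × B × C} :
    p ∈ join R S ↔ (p.1, p.2.1) ∈ R ∧ (p.2.1, p.2.2) ∈ S := by
  obtain ⟨a, b, c⟩ := p
  constructor
  · simp only [join, mem_image, mem_filter, mem_product]
    rintro ⟨⟨⟨a, b⟩, ⟨b', c⟩⟩, ⟨⟨hR, hS⟩, rfl : b = b'⟩, ⟨⟩⟩
    exact ⟨hR, hS⟩
  · intro h
    exact mem_image.2 ⟨((a, b), (b, c)), mem_filter.2 ⟨mem_product.2 h, rfl⟩, rfl⟩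

theorem card_join_le {R : Finset (A × B)} (S : Finset (B × C)) {τ : ℝ}
    (h : ∀ b, #{p ∈ R | p.2 = b} ≤ τ) : #(join R S) ≤ τ * #S := by
  refine card_le_mul_card_of_card_fiber_le (f := Prod.snd) (fun p hp => (mem_join.1 hp).2)
    fun ⟨b, c⟩ _ => le_trans ?_ (h b)
  have hsub : {p ∈ join R S | p.2 = (b, c)} ⊆ {p ∈ R | p.2 = b}.image fun p => (p.1, b, c) := by
    rintro ⟨a, b', c'⟩ hp
    obtain ⟨hp, ⟨⟩⟩ := mem_filter.1 hp
    exact mem_image.2 ⟨(a, b), mem_filter.2 ⟨(mem_join.1 hp).1, rfl⟩, rfl⟩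
  exact_mod_cast (card_le_card hsub).trans card_image_le

theorem setOf_mem_and_mem_eq_coe_image_product (D : Finset B) (T : Finset (A × C)) :
    {p : A × B × C | p.2.1 ∈ D ∧ (p.1, p.2.2) ∈ T} =
      ↑((D ×ˢ T).image fun q => (q.2.1, q.1, q.2.2)) := by
  ext ⟨a, b, c⟩
  simp only [Set.mem_ofPred_eq, coe_image, coe_product, Set.mem_image, Set.mem_prod, mem_coe,
    Prod.mk.injEq]
  constructor
  · rintro ⟨hb, ht⟩
    exact ⟨(b, a, c), ⟨hb, ht⟩, rfl, rfl, rfl⟩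
  · rintro ⟨⟨b, a, c⟩, ⟨hb, ht⟩, rfl, rfl, rfl⟩
    exact ⟨hb, ht⟩

end Relation

open Relation

/-- **Heavy/light decomposition for the triangle query** (Example 4.2).
`R ⊆ A×B`, `S ⊆ B×C`, `T ⊆ A×C` are finite relations and `τ > 0`.
`D` is the set of heavy join keys `b` (those with `|R[b]| > τ`),
`G` the light part of `R`, `J` the triangle join, `X = D × T` and
`Y = G ⋈ S`.  Then `J ⊆ X ∪ Y` with `X, Y` disjoint, `|D| ≤ |R|/τ`,
`|X| ≤ |R|·|T|/τ`, `|Y| ≤ τ·|S|`, and consequently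
`|J| ≤ |R|·|T|/τ + τ·|S|`. -/
theorem triangle_heavy_light_decomposition
    {A B C : Type*}
    (R : Finset (A × B)) (S : Finset (B × C)) (T : Finset (A × C))
    (τ : ℝ) (hτ : 0 < τ)
    (D : Set B) (hD : D = {b : B | τ < (Nat.card {a : A | (a, b) ∈ R} : ℝ)})
    (G : Set (A × B)) (hG : G = {p : A × B | p ∈ R ∧ p.2 ∉ D})
    (J X Y : Set (A × B × C))
    (hJ : J = {p : A × B × C |
      (p.1, p.2.1) ∈ R ∧ (p.2.1, p.2.2) ∈ S ∧ (p.1, p.2.2) ∈ T})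
    (hX : X = {p : A × B × C | p.2.1 ∈ D ∧ (p.1, p.2.2) ∈ T})
    (hY : Y = {p : A × B × C | (p.1, p.2.1) ∈ G ∧ (p.2.1, p.2.2) ∈ S}) :
    -- (i)
    (J ⊆ X ∪ Y) ∧ Disjoint X Y ∧
    -- (ii)
    D.Finite ∧ (Nat.card D : ℝ) ≤ (R.card : ℝ) / τ ∧
    X.Finite ∧ (Nat.card X : ℝ) ≤ (R.card : ℝ) * (T.card : ℝ) / τ ∧
    -- (iii)
    Y.Finite ∧ (Nat.card Y : ℝ) ≤ τ * (S.card : ℝ) ∧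
    J.Finite ∧ (Nat.card J : ℝ) ≤ (R.card : ℝ) * (T.card : ℝ) / τ + τ * (S.card : ℝ) := by
  classical
  set H := heavyKeys R τ
  have hDH : D = H := hD.trans (setOf_heavy_eq_coe_heavyKeys R hτ.le)
  have hXH : X = ↑((H ×ˢ T).image fun q => (q.2.1, q.1, q.2.2)) := by
    rw [hX, hDH]
    exact setOf_mem_and_mem_eq_coe_image_product H T
  have hYH : Y = ↑(join {p ∈ R | p.2 ∉ H} S) := by
    ext p
    simp [hY, hG, hDH, mem_join]
  have hJXY : J ⊆ X ∪ Y := by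
    intro p hpJ
    obtain ⟨hR, hS, hT⟩ := hJ ▸ hpJ
    by_cases hp : p.2.1 ∈ D
    · exact Or.inl (hX ▸ ⟨hp, hT⟩)
    · exact Or.inr (hY ▸ hG ▸ ⟨⟨hR, hp⟩, hS⟩)
  have hH : (#H : ℝ) ≤ #R / τ := (le_div_iff₀' hτ).2 (mul_card_heavyKeys_le R τ)
  have hXcard : (Nat.card X : ℝ) ≤ #R * #T / τ := by
    rw [hXH, Nat.card_coe_set_eq, Set.ncard_coe_finset, mul_div_right_comm]
    calc _ ≤ ((#H * #T : ℕ) : ℝ) := by exact_mod_cast card_image_le.trans_eq (card_product H T)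
      _ ≤ #R / τ * #T := by push_cast; gcongr
  have hYcard : (Nat.card Y : ℝ) ≤ τ * #S := by
    rw [hYH, Nat.card_coe_set_eq, Set.ncard_coe_finset]
    exact card_join_le S (card_filter_notMem_heavyKeys_fiber_le R hτ.le)
  have hXfin : X.Finite := hXH ▸ finite_toSet _
  have hYfin : Y.Finite := hYH ▸ finite_toSet _
  refine ⟨hJXY, ?_, hDH ▸ finite_toSet H, by simpa [hDH] using hH, hXfin, hXcard, hYfin, hYcard,
    (hXfin.union hYfin).subset hJXY, ?_⟩
  · rw [hX, hY, hG, Set.disjoint_left]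
    exact fun p hpX hpY => hpY.1.2 hpX.1
  · calc (Nat.card J : ℝ) ≤ Nat.card X + Nat.card Y := by
          exact_mod_cast Set.natCard_le_add_of_subset_union hXfin hYfin hJXY
      _ ≤ _ := add_le_add hXcard hYcard
end

section
/- (Triangle join bound, the n = 3 Loomis–Whitney bound for the query R ⋈ S ⋈ T) Let A, B, C be types and let R ⊆ A×B, S ⊆ B×C, T ⊆ A×C be finite relations. Then |{ (a,b,c) : (a,b) ∈ R, (b,c) ∈ S, (a,c) ∈ T }| ≤ √(|R|·|S|·|T|). -/
/-!
Let `E` be the join. Grouping its triples by their `R`-edge `(a, b)`, Cauchy–Schwarz gives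
|E|² ≤ |R| · #{(p, q) ∈ E × E : p and q share their R-edge}. Such a pair `((a,b,c), (a,b,c'))`
is determined by `((b,c), (a,c')) ∈ S × T`, so |E|² ≤ |R| |S| |T|.
-/

open Finset

section Fibers

variable {α β : Type*} [DecidableEq β] {f : α → β} {s : Finset α} {t : Finset β}

theorem sum_card_fiber_sq_eq_card_filter_eq (hf : Set.MapsTo f s t) :
    ∑ b ∈ t, #{a ∈ s | f a = b} ^ 2 = #{pq ∈ s ×ˢ s | f pq.1 = f pq.2} := by
  have hmaps : Set.MapsTo (fun pq : α × α ↦ f pq.1) ↑{pq ∈ s ×ˢ s | f pq.1 = f pq.2} t :=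
    fun pq hpq ↦ hf (mem_product.1 (mem_filter.1 hpq).1).1
  rw [card_eq_sum_card_fiberwise hmaps]
  refine sum_congr rfl fun b _ ↦ ?_
  rw [sq, ← card_product]
  congr 1
  ext ⟨p, q⟩
  simp only [mem_filter, mem_product]
  constructor
  · rintro ⟨⟨hp, rfl⟩, hq, hqp⟩
    exact ⟨⟨⟨hp, hq⟩, hqp.symm⟩, rfl⟩
  · rintro ⟨⟨⟨hp, hq⟩, hpq⟩, rfl⟩
    exact ⟨⟨hp, rfl⟩, hq, hpq.symm⟩

theorem card_sq_le_card_mul_card_filter_eq (hf : Set.MapsTo f s t) :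
    #s ^ 2 ≤ #t * #{pq ∈ s ×ˢ s | f pq.1 = f pq.2} :=
  calc #s ^ 2 = (∑ b ∈ t, #{a ∈ s | f a = b}) ^ 2 := by rw [card_eq_sum_card_fiberwise hf]
    _ ≤ #t * ∑ b ∈ t, #{a ∈ s | f a = b} ^ 2 := sq_sum_le_card_mul_sum_sq
    _ = #t * #{pq ∈ s ×ˢ s | f pq.1 = f pq.2} := by
      rw [sum_card_fiber_sq_eq_card_filter_eq hf]

end Fibers

theorem card_sq_le_card_mul_card_mul_card {A B C : Type*} [DecidableEq A] [DecidableEq B]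
    {R : Finset (A × B)} {S : Finset (B × C)} {T : Finset (A × C)} {E : Finset (A × B × C)}
    (hR : ∀ p ∈ E, (p.1, p.2.1) ∈ R) (hS : ∀ p ∈ E, (p.2.1, p.2.2) ∈ S)
    (hT : ∀ p ∈ E, (p.1, p.2.2) ∈ T) :
    #E ^ 2 ≤ #R * #S * #T := by
  have hpairs : #{pq ∈ E ×ˢ E | (pq.1.1, pq.1.2.1) = (pq.2.1, pq.2.2.1)} ≤ #S * #T := by
    rw [← card_product]
    refine card_le_card_of_injOn (fun pq ↦ (pq.1.2, (pq.2.1, pq.2.2.2))) ?_ ?_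
    · intro pq hpq
      obtain ⟨hpq, -⟩ := mem_filter.1 hpq
      exact mem_product.2 ⟨hS _ (mem_product.1 hpq).1, hT _ (mem_product.1 hpq).2⟩
    · rintro ⟨⟨a, b, c⟩, ⟨a₁, b₁, c₁⟩⟩ h ⟨⟨a', b', c'⟩, ⟨a₁', b₁', c₁'⟩⟩ h' heq
      simp only [coe_filter, Set.mem_ofPred_eq, Prod.mk.injEq] at h h' heq
      obtain ⟨-, rfl, rfl⟩ := h
      obtain ⟨-, rfl, rfl⟩ := h'
      obtain ⟨⟨rfl, rfl⟩, rfl, rfl⟩ := heq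
      rfl
  calc #E ^ 2 ≤ #R * #{pq ∈ E ×ˢ E | (pq.1.1, pq.1.2.1) = (pq.2.1, pq.2.2.1)} :=
        card_sq_le_card_mul_card_filter_eq (f := fun p : A × B × C ↦ (p.1, p.2.1)) hR
    _ ≤ #R * #S * #T := by
      rw [mul_assoc]
      exact Nat.mul_le_mul_left _ hpairs

/-- **Triangle join bound** (the `n = 3` Loomis–Whitney bound for `R ⋈ S ⋈ T`).
For finite relations `R ⊆ A×B`, `S ⊆ B×C`, `T ⊆ A×C`, the triangle join
`{(a,b,c) : (a,b) ∈ R, (b,c) ∈ S, (a,c) ∈ T}` is finite and its size is at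
most `√(|R|·|S|·|T|)`. -/
theorem triangle_join_bound
    {A B C : Type*}
    (R : Finset (A × B)) (S : Finset (B × C)) (T : Finset (A × C))
    (J : Set (A × B × C))
    (hJ : J = {p : A × B × C |
      (p.1, p.2.1) ∈ R ∧ (p.2.1, p.2.2) ∈ S ∧ (p.1, p.2.2) ∈ T}) :
    J.Finite ∧
    (Nat.card J : ℝ) ≤ Real.sqrt ((R.card : ℝ) * (S.card : ℝ) * (T.card : ℝ)) := by
  classical
  have hfin : J.Finite := by
    refine (R ×ˢ S).finite_toSet.image (fun q ↦ (q.1.1, q.1.2, q.2.2)) |>.subset ?_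
    rintro ⟨a, b, c⟩ hp
    rw [hJ] at hp
    exact ⟨((a, b), (b, c)), mem_product.2 ⟨hp.1, hp.2.1⟩, rfl⟩
  refine ⟨hfin, ?_⟩
  have hmem : ∀ p ∈ hfin.toFinset,
      (p.1, p.2.1) ∈ R ∧ (p.2.1, p.2.2) ∈ S ∧ (p.1, p.2.2) ∈ T :=
    fun p hp ↦ by rw [Set.Finite.mem_toFinset, hJ] at hp; exact hp
  have hsq := card_sq_le_card_mul_card_mul_card (fun p hp ↦ (hmem p hp).1)
    (fun p hp ↦ (hmem p hp).2.1) (fun p hp ↦ (hmem p hp).2.2)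
  rw [Nat.card_eq_card_finite_toFinset hfin, Real.le_sqrt (by positivity) (by positivity)]
  exact_mod_cast hsq
end

section
/- (Sizes of the hard Loomis–Whitney instance; proof of Lemma 6.1) Let n ≥ 3 and M ≥ 1 be integers and let D = {0, 1, …, M}. For each i ∈ {1,…,n}, let R_i ⊆ D^{[n]∖{i}} be the set of all tuples having at most one nonzero coordinate. Then |R_i| = (n−1)·M + 1 for every i, and the natural join { t ∈ D^{[n]} : t|_{[n]∖{i}} ∈ R_i for all i ∈ [n] } equals the set of all tuples in D^{[n]} having at most one nonzero coordinate, which has exactly n·M + 1 elements. -/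
/-!
A tuple with at most one nonzero coordinate is either `0` or `Pi.single a v` with `1 ≤ v ≤ M`,
so there are `|A| * M + 1` of them. In the join, a tuple with two nonzero coordinates `j₁ ≠ j₂`
is impossible: with at least three attributes some `i ∉ {j₁, j₂}` exists, and the restriction
to `A ∖ {i}` still has both nonzero coordinates.
-/

/-- The full simple relation on attribute set `A` over the domain
`D = {0, …, M} ⊆ ℕ`: all tuples `A → ℕ` with values `≤ M` having at most one
nonzero coordinate. -/
def simpleRel (A : Type*) [Fintype A] [DecidableEq A] (M : ℕ) : Set (A → ℕ) :=
  {t | (∀ a, t a ≤ M) ∧ (Finset.univ.filter (fun a => t a ≠ 0)).card ≤ 1}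

open Finset

section Support

variable {ι α : Type*} [Fintype ι] [Zero α] [DecidableEq α]

theorem card_filter_ne_zero_le_one_iff [DecidableEq ι] {t : ι → α} :
    #{a | t a ≠ 0} ≤ 1 ↔ t = 0 ∨ ∃ a, t = Pi.single a (t a) := by
  constructor
  · intro h
    by_cases ht : t = 0
    · exact .inl ht
    obtain ⟨a, ha⟩ := Function.ne_iff.mp ht
    refine .inr ⟨a, funext fun b => ?_⟩
    by_cases hb : b = a
    · subst hb; simp
    · rw [Pi.single_eq_of_ne hb]
      by_contra hb0
      exact hb (card_le_one.mp h b (by simpa using hb0) a (by simpa using ha))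
  · rintro (rfl | ⟨a, ht⟩)
    · simp
    · have hsupp : ∀ d ∈ ({a | t a ≠ 0} : Finset ι), d = a := fun d hd => by
        by_contra hda
        simp [congrFun ht d, Pi.single_eq_of_ne hda] at hd
      exact card_le_one.mpr fun b hb c hc => (hsupp b hb).trans (hsupp c hc).symm

theorem card_filter_subtype_ne_zero_le (p : ι → Prop) [DecidablePred p] (t : ι → α) :
    #{j : Subtype p | t j.1 ≠ 0} ≤ #{j | t j ≠ 0} :=
  card_le_card_of_injOn Subtype.val (fun j hj => by simpa using hj) Subtype.val_injective.injOn

theorem card_filter_ne_zero_le_one_of_forall_ne [DecidableEq ι] (hι : 3 ≤ Fintype.card ι)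
    (t : ι → α) (h : ∀ i, #{j : {j // j ≠ i} | t j.1 ≠ 0} ≤ 1) : #{j | t j ≠ 0} ≤ 1 := by
  by_contra! htwo
  obtain ⟨j₁, hj₁, j₂, hj₂, hne⟩ := one_lt_card.mp htwo
  obtain ⟨i, -, hi⟩ : ∃ i ∈ univ, i ∉ ({j₁, j₂} : Finset ι) :=
    exists_mem_notMem_of_card_lt_card (card_le_two.trans_lt hι)
  simp only [mem_insert, mem_singleton, not_or] at hi
  refine (h i).not_gt (one_lt_card.mpr ⟨⟨j₁, Ne.symm hi.1⟩, ?_, ⟨j₂, Ne.symm hi.2⟩, ?_, ?_⟩)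
  · simpa using hj₁
  · simpa using hj₂
  · simpa using hne

end Support

variable {A : Type*} [Fintype A] [DecidableEq A]

theorem simpleRel_eq_insert_range (M : ℕ) : simpleRel A M =
    insert 0 (Set.range fun p : A × Fin M => Pi.single p.1 ((p.2 : ℕ) + 1)) := by
  ext t
  simp only [simpleRel, card_filter_ne_zero_le_one_iff, Set.mem_insert_iff, Set.mem_range,
    Set.mem_ofPred_eq, Prod.exists]
  constructor
  · rintro ⟨hle, rfl | ⟨a, ht⟩⟩
    · exact .inl rfl
    obtain hta | hta := Nat.eq_zero_or_pos (t a)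
    · exact .inl (by rw [ht, hta, Pi.single_zero])
    · refine .inr ⟨a, ⟨t a - 1, by have := hle a; omega⟩, ?_⟩
      rw [Fin.val_mk, Nat.sub_add_cancel hta, ← ht]
  · rintro (rfl | ⟨a, v, rfl⟩)
    · exact ⟨fun _ => Nat.zero_le M, .inl rfl⟩
    · refine ⟨fun b => ?_, .inr ⟨a, by rw [Pi.single_eq_same]⟩⟩
      rw [Pi.single_apply]
      split_ifs <;> omega

theorem card_simpleRel (M : ℕ) : Nat.card (simpleRel A M) = Fintype.card A * M + 1 := by
  have hinj :
      Function.Injective fun p : A × Fin M => (Pi.single p.1 ((p.2 : ℕ) + 1) : A → ℕ) := by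
    rintro ⟨a, v⟩ ⟨b, w⟩ h
    obtain rfl : a = b := by
      by_contra hab
      simpa [Pi.single_eq_of_ne hab] using congrFun h a
    simpa [Fin.ext_iff] using Pi.single_injective a h
  have hzero :
      (0 : A → ℕ) ∉ Set.range fun p : A × Fin M => (Pi.single p.1 ((p.2 : ℕ) + 1) : A → ℕ) := by
    rintro ⟨⟨a, v⟩, h⟩
    simpa using congrFun h a
  rw [simpleRel_eq_insert_range, Nat.card_coe_set_eq, Set.ncard_insert_of_notMem hzero,
    Set.ncard_range_of_injective hinj, Nat.card_eq_fintype_card, Fintype.card_prod,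
    Fintype.card_fin]

theorem setOf_forall_restrict_mem_simpleRel_eq (hA : 3 ≤ Fintype.card A) (M : ℕ) :
    {t : A → ℕ | (∀ j, t j ≤ M) ∧
        ∀ i : A, (fun j : {j : A // j ≠ i} => t j) ∈ simpleRel {j : A // j ≠ i} M}
      = simpleRel A M := by
  ext t
  simp only [simpleRel, Set.mem_ofPred_eq]
  constructor
  · rintro ⟨hle, hres⟩
    exact ⟨hle, card_filter_ne_zero_le_one_of_forall_ne hA t fun i => (hres i).2⟩
  · rintro ⟨hle, hsupp⟩
    exact ⟨hle, fun i => ⟨fun j => hle j, (card_filter_subtype_ne_zero_le _ t).trans hsupp⟩⟩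

theorem loomis_whitney_hard_instance_sizes_general
    (n M : ℕ) (hn : 3 ≤ n) :
    (∀ i : Fin n,
      Nat.card (simpleRel {j : Fin n // j ≠ i} M) = (n - 1) * M + 1) ∧
    ({t : Fin n → ℕ | (∀ j, t j ≤ M) ∧
        ∀ i : Fin n, (fun j : {j : Fin n // j ≠ i} => t j) ∈ simpleRel {j : Fin n // j ≠ i} M}
      = simpleRel (Fin n) M) ∧
    Nat.card (simpleRel (Fin n) M) = n * M + 1 := by
  refine ⟨fun i => ?_, setOf_forall_restrict_mem_simpleRel_eq (by rwa [Fintype.card_fin]) M, ?_⟩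
  · rw [card_simpleRel, Fintype.card_subtype_compl, Fintype.card_fin, Fintype.card_unique]
  · rw [card_simpleRel, Fintype.card_fin]

/-- **Sizes of the hard Loomis–Whitney instance** (proof of Lemma 6.1).
For `n ≥ 3`, `M ≥ 1` and `D = {0,…,M}`, the full simple relation `R i` on
`[n] ∖ {i}` has `(n-1)·M + 1` tuples for every `i`; the natural join
`{t ∈ D^[n] : t|_{[n]∖{i}} ∈ R i  ∀ i}` equals the set of tuples of `D^[n]`
with at most one nonzero coordinate, which has exactly `n·M + 1` elements. -/
theorem loomis_whitney_hard_instance_sizes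
    (n M : ℕ) (hn : 3 ≤ n) (hM : 1 ≤ M) :
    (∀ i : Fin n,
      Nat.card (simpleRel {j : Fin n // j ≠ i} M) = (n - 1) * M + 1) ∧
    ({t : Fin n → ℕ | (∀ j, t j ≤ M) ∧
        ∀ i : Fin n, (fun j : {j : Fin n // j ≠ i} => t j) ∈ simpleRel {j : Fin n // j ≠ i} M}
      = simpleRel (Fin n) M) ∧
    Nat.card (simpleRel (Fin n) M) = n * M + 1 :=
  loomis_whitney_hard_instance_sizes_general n M hn
end

section
/- (Join lower bound for simple relations with incomparable attribute sets; proof of Lemma 6.1) Let M ≥ 0 be an integer, D = {0,…,M}, and let A_S, A_T be finite attribute sets such that neither A_S ⊆ A_T nor A_T ⊆ A_S. Let S be the full simple relation on A_S over D and T the full simple relation on A_T over D. Then the join { t : A_S ∪ A_T → D | t|_{A_S} ∈ S and t|_{A_T} ∈ T } has at least (M+1)² elements. -/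
/-- **Join lower bound for simple relations with incomparable attribute sets**
(proof of Lemma 6.1).  If neither `A_S ⊆ A_T` nor `A_T ⊆ A_S`, and `S`, `T`
are the full simple relations on `A_S`, `A_T` over `D = {0,…,M}`, then the join
`{t : A_S ∪ A_T → D | t|_{A_S} ∈ S, t|_{A_T} ∈ T}` has at least `(M+1)²`
elements. -/
theorem simple_join_lower_bound
    {V : Type*} [DecidableEq V] (M : ℕ)
    (AS AT : Finset V) (hST : ¬ AS ⊆ AT) (hTS : ¬ AT ⊆ AS) :
    (M + 1) ^ 2 ≤
      Nat.card {t : {v // v ∈ AS ∪ AT} → ℕ |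
        ((fun v : {v // v ∈ AS} => t ⟨v.1, Finset.mem_union_left _ v.2⟩)
            ∈ simpleRel {v // v ∈ AS} M) ∧
        ((fun v : {v // v ∈ AT} => t ⟨v.1, Finset.mem_union_right _ v.2⟩)
            ∈ simpleRel {v // v ∈ AT} M)} := by
  classical
  obtain ⟨a, haS, haT⟩ : ∃ a, a ∈ AS ∧ a ∉ AT := by
    simpa [Finset.subset_iff] using hST
  obtain ⟨b, hbT, hbS⟩ : ∃ b, b ∈ AT ∧ b ∉ AS := by
    simpa [Finset.subset_iff] using hTS
  have hab : a ≠ b := fun h => haT (h ▸ hbT)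
  set J : Set ({v // v ∈ AS ∪ AT} → ℕ) :=
    {t : {v // v ∈ AS ∪ AT} → ℕ |
        ((fun v : {v // v ∈ AS} => t ⟨v.1, Finset.mem_union_left _ v.2⟩)
            ∈ simpleRel {v // v ∈ AS} M) ∧
        ((fun v : {v // v ∈ AT} => t ⟨v.1, Finset.mem_union_right _ v.2⟩)
            ∈ simpleRel {v // v ∈ AT} M)} with hJ
  -- J is finite
  have hfin : J.Finite := by
    have : J ⊆ Set.pi Set.univ (fun _ : {v // v ∈ AS ∪ AT} => Set.Iic M) := by
      intro t ht v _
      rcases Finset.mem_union.mp v.2 with hv | hv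
      · exact ht.1.1 ⟨v.1, hv⟩
      · exact ht.2.1 ⟨v.1, hv⟩
    exact (Set.Finite.pi (fun _ => Set.finite_Iic M)).subset this
  have : Finite J := hfin
  -- the injection
  set f : Fin (M + 1) × Fin (M + 1) → ({v // v ∈ AS ∪ AT} → ℕ) :=
    fun p v => if v.1 = a then p.1 else if v.1 = b then p.2 else 0 with hf
  have hmem : ∀ p, f p ∈ J := by
    intro p
    constructor
    · constructor
      · intro v
        simp only [hf]
        split_ifs
        · exact Nat.lt_succ_iff.mp p.1.2
        · exact Nat.lt_succ_iff.mp p.2.2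
        · exact Nat.zero_le _
      · apply Finset.card_le_one.mpr
        intro x hx y hy
        simp only [Finset.mem_filter, hf] at hx hy
        have hxa : x.1 = a := by
          by_contra h
          have hxb : x.1 ≠ b := fun hh => hbS (hh ▸ x.2)
          simp [h, hxb] at hx
        have hya : y.1 = a := by
          by_contra h
          have hyb : y.1 ≠ b := fun hh => hbS (hh ▸ y.2)
          simp [h, hyb] at hy
        exact Subtype.ext (hxa.trans hya.symm)
    · constructor
      · intro v
        simp only [hf]
        split_ifs
        · exact Nat.lt_succ_iff.mp p.1.2
        · exact Nat.lt_succ_iff.mp p.2.2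
        · exact Nat.zero_le _
      · apply Finset.card_le_one.mpr
        intro x hx y hy
        simp only [Finset.mem_filter, hf] at hx hy
        have hxb : x.1 = b := by
          by_contra h
          have hxa : x.1 ≠ a := fun hh => haT (hh ▸ x.2)
          simp [h, hxa] at hx
        have hyb : y.1 = b := by
          by_contra h
          have hya : y.1 ≠ a := fun hh => haT (hh ▸ y.2)
          simp [h, hya] at hy
        exact Subtype.ext (hxb.trans hyb.symm)
  have hinj : Function.Injective (fun p => (⟨f p, hmem p⟩ : J)) := by
    intro p q hpq
    have h1 : f p = f q := congrArg Subtype.val hpq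
    have ha' : a ∈ AS ∪ AT := Finset.mem_union_left _ haS
    have hb' : b ∈ AS ∪ AT := Finset.mem_union_right _ hbT
    have e1 := congrFun h1 ⟨a, ha'⟩
    have e2 := congrFun h1 ⟨b, hb'⟩
    simp only [hf, if_pos rfl] at e1
    simp only [hf, if_neg (Ne.symm hab), if_pos rfl] at e2
    exact Prod.ext (Fin.ext e1) (Fin.ext e2)
  calc (M + 1) ^ 2 = Nat.card (Fin (M + 1) × Fin (M + 1)) := by
        simp [Nat.card_eq_fintype_card, sq]
    _ ≤ Nat.card J := Nat.card_le_card_of_injective _ hinj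
end

section
/- (Half-integrality of basic feasible solutions of the fractional edge cover polytope; Lemma 6.4, first part) Let G = (V,E) be a finite simple graph with no isolated vertices, and let P = { x ∈ ℝ^E : x_e ≥ 0 for all e ∈ E, and ∑_{e∈E : v∈e} x_e ≥ 1 for all v ∈ V } be its fractional edge cover polyhedron. Then every extreme point x of P satisfies x_e ∈ {0, 1/2, 1} for every e ∈ E. -/
/-!
An extreme point `x` is basic: a direction `d` supported on the support of `x` that keeps every
tight vertex tight must vanish, since `x ± t d` would stay in the polyhedron for small `t`.
Let `A` be the edges with `0 < x e < 1` and `T` the tight vertices they meet. Basicness gives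
`|A| ≤ |T|` by a rank count, while every vertex of `T` meets at least two edges of `A`, and each
edge has at most two ends; double counting forces every vertex of `T` to meet exactly two edges of
`A`, of total weight `1`. Then `d = x - 1/2` on `A` (and `0` elsewhere) keeps every tight vertex
tight, so it vanishes.
-/

open Finset Filter Topology

theorem eq_zero_of_mem_extremePoints_of_tight {J E : Type*} [Finite J] [AddCommGroup E]
    [Module ℝ E] {f : J → E →ₗ[ℝ] ℝ} {b : J → ℝ} {x d : E}
    (hx : x ∈ Set.extremePoints ℝ {y | ∀ j, b j ≤ f j y})
    (hd : ∀ j, f j x = b j → f j d = 0) : d = 0 := by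
  have hnear : ∀ᶠ t in 𝓝 (0 : ℝ), x + t • d ∈ {y | ∀ j, b j ≤ f j y} := by
    refine eventually_all.2 fun j => ?_
    simp only [map_add, map_smul, smul_eq_mul]
    rcases (hx.1 j).eq_or_lt with htight | hslack
    · exact .of_forall fun t => by simp [← htight, hd j htight.symm]
    · exact (continuous_const.add (continuous_id.mul continuous_const)).continuousAt.eventually
        (lt_mem_nhds (by simpa using hslack)) |>.mono fun _ => le_of_lt
  have hnear' := hnear.and ((continuous_neg.tendsto' (0 : ℝ) 0 neg_zero).eventually hnear)
  obtain ⟨t, ⟨hplus, hminus⟩, ht⟩ :=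
    ((hnear'.filter_mono nhdsWithin_le_nhds).and self_mem_nhdsWithin).exists (f := 𝓝[≠] (0 : ℝ))
  have hmid : x ∈ openSegment ℝ (x + t • d) (x + (-t) • d) :=
    ⟨1 / 2, 1 / 2, by norm_num, by norm_num, by norm_num, by module⟩
  exact (by simpa using hx.2 hplus hminus hmid : t = 0 ∨ d = 0).resolve_left ht

namespace EdgeCover

variable {ι V : Type*} [Fintype ι] (inc : ι → V → Prop) [∀ i v, Decidable (inc i v)]

def load (v : V) : (ι → ℝ) →ₗ[ℝ] ℝ := ∑ i ∈ univ.filter (inc · v), LinearMap.proj i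

lemma load_apply (v : V) (x : ι → ℝ) : load inc v x = ∑ i ∈ univ.filter (inc · v), x i := by
  simp [load]

def coverPolyhedron : Set (ι → ℝ) := {x | (∀ i, 0 ≤ x i) ∧ ∀ v, 1 ≤ load inc v x}

def IsBasic (x : ι → ℝ) : Prop :=
  ∀ d : ι → ℝ, (∀ i, x i = 0 → d i = 0) → (∀ v, load inc v x = 1 → load inc v d = 0) → d = 0

noncomputable def fractionalPart (x : ι → ℝ) : Finset ι := univ.filter fun i => 0 < x i ∧ x i < 1

noncomputable def tightVerticesMeeting [Fintype V] (x : ι → ℝ) (S : Finset ι) : Finset V :=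
  univ.filter fun v => load inc v x = 1 ∧ ∃ i ∈ S, inc i v

lemma coverPolyhedron_eq_setOf_le :
    coverPolyhedron inc =
      {y | ∀ j, Sum.elim (0 : ι → ℝ) 1 j ≤ Sum.elim LinearMap.proj (load inc) j y} := by
  ext y
  simp [coverPolyhedron]

variable {inc} {x : ι → ℝ}

lemma isBasic_of_mem_extremePoints [Finite V] (hx : x ∈ (coverPolyhedron inc).extremePoints ℝ) :
    IsBasic inc x := fun d hd0 hd1 => by
  rw [coverPolyhedron_eq_setOf_le] at hx
  exact eq_zero_of_mem_extremePoints_of_tight hx (Sum.forall.2 ⟨hd0, hd1⟩)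

lemma le_load (hx0 : ∀ i, 0 ≤ x i) {i : ι} {v : V} (h : inc i v) : x i ≤ load inc v x := by
  rw [load_apply]
  exact single_le_sum (fun j _ => hx0 j) (mem_filter.2 ⟨mem_univ i, h⟩)

lemma le_one_of_isBasic (hx0 : ∀ i, 0 ≤ x i) (hx : IsBasic inc x) (i : ι) : x i ≤ 1 := by
  classical
  by_contra! hi
  have hsingle := hx (Pi.single i 1) (fun j hj => Pi.single_eq_of_ne (by rintro rfl; linarith) _)
    fun v hv => by
      have hiv : ¬ inc i v := fun h => by linarith [le_load hx0 h]
      simp [load_apply, sum_pi_single', hiv]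
  simpa using congrFun hsingle i

variable [Fintype V]

lemma sum_fractionalPart_at_eq_one (hx0 : ∀ i, 0 ≤ x i) (hx1 : ∀ i, x i ≤ 1) {v : V}
    (hv : v ∈ tightVerticesMeeting inc x (fractionalPart x)) :
    ∑ j ∈ fractionalPart x with inc j v, x j = 1 := by
  classical
  obtain ⟨hv, i, hi, hiv⟩ := (mem_filter.1 hv).2
  have hiA : 0 < x i ∧ x i < 1 := by simpa [fractionalPart] using hi
  rw [← hv, load_apply]
  refine sum_subset (fun j hj => mem_filter.2 ⟨mem_univ j, (mem_filter.1 hj).2⟩) fun j hjv hj => ?_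
  have hjv : inc j v := (mem_filter.1 hjv).2
  have hjA : ¬ (0 < x j ∧ x j < 1) := fun h => hj (by simp [fractionalPart, h, hjv])
  rcases (hx0 j).eq_or_lt with h0 | hpos
  · exact h0.symm
  · have hij : i ≠ j := by rintro rfl; exact hjA hiA
    have hpair : x i + x j ≤ load inc v x := by
      rw [← sum_pair hij, load_apply]
      exact sum_le_sum_of_subset_of_nonneg (by simp [insert_subset_iff, hiv, hjv])
        fun k _ _ => hx0 k
    have : x j = 1 := by by_contra h; exact hjA ⟨hpos, lt_of_le_of_ne (hx1 j) h⟩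
    linarith

lemma card_le_card_tightVerticesMeeting (hx : IsBasic inc x) {S : Finset ι}
    (hS : ∀ i ∈ S, x i ≠ 0) : #S ≤ #(tightVerticesMeeting inc x S) := by
  classical
  set T := tightVerticesMeeting inc x S
  let ψ : (ι → ℝ) →ₗ[ℝ] ((↥Sᶜ → ℝ) × (↥T → ℝ)) :=
    (LinearMap.pi fun i : ↥Sᶜ => LinearMap.proj (i : ι)).prod (LinearMap.pi fun v : ↥T => load inc v)
  have hψ : Function.Injective ψ := by
    refine (injective_iff_map_eq_zero ψ).2 fun d hd => ?_
    simp only [ψ, LinearMap.prod_apply, Function.prod_apply, Prod.mk_eq_zero, funext_iff,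
      LinearMap.pi_apply, LinearMap.coe_proj, Function.eval, Pi.zero_apply, Subtype.forall,
      mem_compl] at hd
    have hoff : ∀ i ∉ S, d i = 0 := fun i hi => hd.1 i hi
    refine hx d (fun i hi => hoff i fun hiS => hS i hiS hi) fun v hv => ?_
    by_cases hvT : v ∈ T
    · exact hd.2 v hvT
    · rw [load_apply]
      refine sum_eq_zero fun i hi => hoff i fun hiS => hvT ?_
      exact mem_filter.2 ⟨mem_univ v, hv, i, hiS, (mem_filter.1 hi).2⟩
  have hrank := LinearMap.finrank_le_finrank_of_injective hψ
  simp only [Module.finrank_prod, Module.finrank_fintype_fun_eq_card, Fintype.card_coe,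
    card_compl] at hrank
  have := card_le_univ S
  omega

lemma two_le_card_fractionalPart_at (hx0 : ∀ i, 0 ≤ x i) (hx1 : ∀ i, x i ≤ 1) {v : V}
    (hv : v ∈ tightVerticesMeeting inc x (fractionalPart x)) :
    2 ≤ #{j ∈ fractionalPart x | inc j v} := by
  obtain ⟨-, i, hi, hiv⟩ := (mem_filter.1 hv).2
  have hlt : ∑ j ∈ fractionalPart x with inc j v, x j < ∑ j ∈ fractionalPart x with inc j v, 1 :=
    sum_lt_sum_of_nonempty ⟨i, mem_filter.2 ⟨hi, hiv⟩⟩ fun j hj =>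
      (mem_filter.1 (mem_filter.1 hj).1).2.2
  rw [sum_fractionalPart_at_eq_one hx0 hx1 hv, sum_const, nsmul_one] at hlt
  exact_mod_cast hlt

lemma card_fractionalPart_at_eq_two (hends : ∀ i, #{v | inc i v} ≤ 2) (hx0 : ∀ i, 0 ≤ x i)
    (hx : IsBasic inc x) {v : V} (hv : v ∈ tightVerticesMeeting inc x (fractionalPart x)) :
    #{j ∈ fractionalPart x | inc j v} = 2 := by
  set A := fractionalPart x
  set T := tightVerticesMeeting inc x A
  have hlow : ∀ v ∈ T, 2 ≤ #{j ∈ A | inc j v} := fun v hv =>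
    two_le_card_fractionalPart_at hx0 (le_one_of_isBasic hx0 hx) hv
  have hAT : #A ≤ #T := card_le_card_tightVerticesMeeting hx fun i hi =>
    (mem_filter.1 hi).2.1.ne'
  have hsum : ∑ v ∈ T, #{j ∈ A | inc j v} ≤ ∑ v ∈ T, 2 := calc
    ∑ v ∈ T, #{j ∈ A | inc j v} = ∑ i ∈ A, #{v ∈ T | inc i v} :=
      sum_card_bipartiteAbove_eq_sum_card_bipartiteBelow (fun v i => inc i v)
    _ ≤ ∑ i ∈ A, 2 := sum_le_sum fun i _ =>
      (card_le_card (filter_subset_filter _ (subset_univ T))).trans (hends i)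
    _ ≤ ∑ v ∈ T, 2 := by simpa [mul_comm] using hAT
  exact ((sum_eq_sum_iff_of_le hlow).1 (le_antisymm (sum_le_sum hlow) hsum) v hv).symm

lemma eq_half_of_mem_fractionalPart (hends : ∀ i, #{v | inc i v} ≤ 2) (hx0 : ∀ i, 0 ≤ x i)
    (hx : IsBasic inc x) {i : ι} (hi : i ∈ fractionalPart x) : x i = 1 / 2 := by
  classical
  set A := fractionalPart x
  set T := tightVerticesMeeting inc x A
  have hd := hx (fun j => if j ∈ A then x j - 1 / 2 else 0)
    (fun j hj => if_neg (by simp [A, fractionalPart, hj])) fun v hv => by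
      rw [load_apply, sum_ite_mem, filter_inter, univ_inter]
      by_cases hvT : v ∈ T
      · rw [sum_sub_distrib, sum_const, card_fractionalPart_at_eq_two hends hx0 hx hvT,
          sum_fractionalPart_at_eq_one hx0 (le_one_of_isBasic hx0 hx) hvT]
        norm_num
      · exact sum_eq_zero fun j hj => absurd
          (mem_filter.2 ⟨mem_univ v, hv, j, (mem_filter.1 hj).1, (mem_filter.1 hj).2⟩) hvT
  have hdi := congrFun hd i
  simp only [hi, if_true, Pi.zero_apply] at hdi
  linarith

theorem half_integral_of_isBasic (hends : ∀ i, #{v | inc i v} ≤ 2) (hx0 : ∀ i, 0 ≤ x i)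
    (hx : IsBasic inc x) (i : ι) : x i = 0 ∨ x i = 1 / 2 ∨ x i = 1 := by
  rcases (hx0 i).eq_or_lt with h0 | hpos
  · exact .inl h0.symm
  rcases (le_one_of_isBasic hx0 hx i).lt_or_eq with hlt | h1
  · exact .inr (.inl (eq_half_of_mem_fractionalPart hends hx0 hx
      (by simp [fractionalPart, hpos, hlt])))
  · exact .inr (.inr h1)

end EdgeCover

lemma Sym2.card_filter_mem_le_two {V : Type*} [Fintype V] [DecidableEq V] (z : Sym2 V) :
    #{v | v ∈ z} ≤ 2 := by
  have hfilter : ({v | v ∈ z} : Finset V) = z.toFinset := by ext; simp [Sym2.mem_toFinset]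
  rw [hfilter]
  induction z using Sym2.ind
  rw [Sym2.toFinset_mk_eq]
  exact card_le_two

theorem edge_cover_extreme_point_half_integral_general
    {V : Type*} [Fintype V] [DecidableEq V]
    (G : SimpleGraph V) [DecidableRel G.Adj]
    (P : Set ({e // e ∈ G.edgeFinset} → ℝ))
    (hP : P = {x | (∀ e, 0 ≤ x e) ∧
      ∀ v : V, 1 ≤ ∑ e ∈ Finset.univ.filter
        (fun e : {e // e ∈ G.edgeFinset} => v ∈ (e : Sym2 V)), x e})
    (x : {e // e ∈ G.edgeFinset} → ℝ) (hx : x ∈ Set.extremePoints ℝ P) :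
    ∀ e, x e = 0 ∨ x e = 1 / 2 ∨ x e = 1 := by
  let inc := fun (e : {e // e ∈ G.edgeFinset}) (v : V) => v ∈ (e : Sym2 V)
  obtain rfl : P = EdgeCover.coverPolyhedron inc := by
    ext y
    simp [hP, EdgeCover.coverPolyhedron, EdgeCover.load_apply, inc]
  exact EdgeCover.half_integral_of_isBasic (fun e => Sym2.card_filter_mem_le_two (e : Sym2 V))
    hx.1.1 (EdgeCover.isBasic_of_mem_extremePoints hx)

/-- **Half-integrality of extreme points of the fractional edge cover
polytope** (Lemma 6.4, first part).  `G` is a finite simple graph with no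
isolated vertices and `P ⊆ ℝ^E` is its fractional edge cover polyhedron.
Every extreme point `x` of `P` satisfies `x e ∈ {0, 1/2, 1}` for each edge. -/
theorem edge_cover_extreme_point_half_integral
    {V : Type*} [Fintype V] [DecidableEq V]
    (G : SimpleGraph V) [DecidableRel G.Adj]
    (hiso : ∀ v : V, ∃ w : V, G.Adj v w)
    (P : Set ({e // e ∈ G.edgeFinset} → ℝ))
    (hP : P = {x | (∀ e, 0 ≤ x e) ∧
      ∀ v : V, 1 ≤ ∑ e ∈ Finset.univ.filter
        (fun e : {e // e ∈ G.edgeFinset} => v ∈ (e : Sym2 V)), x e})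
    (x : {e // e ∈ G.edgeFinset} → ℝ) (hx : x ∈ Set.extremePoints ℝ P) :
    ∀ e, x e = 0 ∨ x e = 1 / 2 ∨ x e = 1 :=
  edge_cover_extreme_point_half_integral_general G P hP x hx
end

section
/- (Refined upper bound on the relaxed join; Theorem 6.7, size bound) Let V be a finite set, E a finite family of m subsets of V, R_e a finite relation on attribute set e for each e ∈ E, and 0 ≤ r ≤ m an integer. Let 𝒞(q,r) = { S ⊆ E : |S| ≥ m−r and ⋃_{e∈S} e = V }, Ĉ(q,r) its set of inclusion-minimal elements, and q_r the relaxed join. Suppose that for each S ∈ Ĉ(q,r) we are given a subset T(S) ⊆ S with ⋃_{e∈T(S)} e = V together with a fractional edge cover y^S of the hypergraph (V, T(S)), in such a way that whenever T(S) = T(S′) one has y^S = y^{S′}. Then |q_r| ≤ ∑_{T} ∏_{e∈T} |R_e|^{y^T_e}, where the sum ranges over the distinct sets T in { T(S) : S ∈ Ĉ(q,r) } and y^T denotes the common cover associated with T. -/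
/-!
Every `S ∈ 𝒞` contains an inclusion-minimal `S' ∈ Ĉ`, so `q_r` is covered by the natural joins
over the sets `T(S')`, and each of these is bounded by the AGM bound `∏ |R_e| ^ y_e`. The AGM
bound is proved in its projection form `|J| ≤ ∏ |π_e J| ^ y_e`, by induction on the set of
attributes on which the tuples of `J` may differ: split `J` by the value `a` of one such attribute
`v`; for each edge `e ∋ v` the projections of the fibres are disjoint, and Hölder's inequality
with the weights `y_e`, `e ∋ v` (of total at least one) reassembles the bounds on the fibres.
-/

open Finset MeasureTheory
open scoped ENNReal

namespace ENNReal

theorem sum_prod_rpow_le_prod_sum_rpow_s16 {α ι : Type*} (s : Finset α) (I : Finset ι)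
    (f : ι → α → ℝ≥0∞) {p : ι → ℝ} (hp : ∑ i ∈ I, p i = 1) (hp0 : ∀ i ∈ I, 0 ≤ p i) :
    ∑ a ∈ s, ∏ i ∈ I, f i a ^ p i ≤ ∏ i ∈ I, (∑ a ∈ s, f i a) ^ p i := by
  let _ : MeasurableSpace α := ⊤
  simpa [lintegral_finsetSum_measure, lintegral_dirac' _ measurable_from_top] using
    lintegral_prod_norm_pow_le (μ := ∑ a ∈ s, Measure.dirac a) I
      (fun i _ => measurable_from_top.aemeasurable) hp hp0

theorem sum_rpow_le_rpow_sum_s16 {α : Type*} (s : Finset α) (f : α → ℝ≥0∞) {p : ℝ} (hp : 1 ≤ p) :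
    ∑ a ∈ s, f a ^ p ≤ (∑ a ∈ s, f a) ^ p := by
  induction s using Finset.cons_induction with
  | empty => simp [zero_rpow_of_pos (zero_lt_one.trans_le hp)]
  | cons a s ha ih =>
    rw [sum_cons, sum_cons]
    exact (add_le_add_right ih _).trans (add_rpow_le_rpow_add _ _ hp)

theorem sum_prod_rpow_le_prod_sum_rpow_of_one_le {α ι : Type*} (s : Finset α) (I : Finset ι)
    (f : ι → α → ℝ≥0∞) {p : ι → ℝ} (hp : 1 ≤ ∑ i ∈ I, p i) (hp0 : ∀ i ∈ I, 0 ≤ p i) :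
    ∑ a ∈ s, ∏ i ∈ I, f i a ^ p i ≤ ∏ i ∈ I, (∑ a ∈ s, f i a) ^ p i := by
  set c := ∑ i ∈ I, p i
  have hc : 0 < c := zero_lt_one.trans_le hp
  have hrescale : ∀ x : ι → ℝ≥0∞, ∏ i ∈ I, x i ^ p i = (∏ i ∈ I, x i ^ (p i / c)) ^ c := by
    intro x
    rw [← prod_rpow_of_nonneg hc.le]
    exact prod_congr rfl fun i _ => by rw [← rpow_mul, div_mul_cancel₀ _ hc.ne']
  have hsum : ∑ i ∈ I, p i / c = 1 := by rw [← sum_div, div_self hc.ne']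
  calc ∑ a ∈ s, ∏ i ∈ I, f i a ^ p i
      = ∑ a ∈ s, (∏ i ∈ I, f i a ^ (p i / c)) ^ c := sum_congr rfl fun a _ => hrescale _
    _ ≤ (∑ a ∈ s, ∏ i ∈ I, f i a ^ (p i / c)) ^ c := sum_rpow_le_rpow_sum_s16 _ _ hp
    _ ≤ (∏ i ∈ I, (∑ a ∈ s, f i a) ^ (p i / c)) ^ c := by
      gcongr
      exact sum_prod_rpow_le_prod_sum_rpow_s16 s I f hsum fun i hi => div_nonneg (hp0 i hi) hc.le
    _ = ∏ i ∈ I, (∑ a ∈ s, f i a) ^ p i := (hrescale _).symm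

end ENNReal

namespace Finset

theorem card_le_prod_card_image_rpow_of_card_le_one {β ι : Type*} {γ : ι → Type*}
    [∀ i, DecidableEq (γ i)] {J : Finset β} (hJ : #J ≤ 1) (T : Finset ι)
    (g : ∀ i, β → γ i) {y : ι → ℝ} (hy0 : ∀ i ∈ T, 0 ≤ y i) :
    (#J : ℝ≥0∞) ≤ ∏ i ∈ T, (#(J.image (g i)) : ℝ≥0∞) ^ y i := by
  obtain rfl | hne := J.eq_empty_or_nonempty
  · simp
  calc (#J : ℝ≥0∞) ≤ 1 := mod_cast hJ
    _ ≤ ∏ i ∈ T, (#(J.image (g i)) : ℝ≥0∞) ^ y i := by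
      refine one_le_prod' fun i hi => ?_
      calc (1 : ℝ≥0∞) = 1 ^ y i := (ENNReal.one_rpow _).symm
        _ ≤ _ := by
          gcongr
          · exact hy0 i hi
          · exact_mod_cast (hne.image (g i)).card_pos

theorem sum_card_image_filter_le {β γ δ : Type*} [DecidableEq γ] [DecidableEq δ]
    (J : Finset β) (g : β → γ) (h : β → δ) (k : γ → δ) (hk : ∀ x ∈ J, h x = k (g x))
    (Ω : Finset δ) :
    ∑ a ∈ Ω, #((J.filter (h · = a)).image g) ≤ #(J.image g) := by
  rw [← card_biUnion]
  · refine card_le_card (biUnion_subset.2 fun a _ => image_subset_image (filter_subset _ _))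
  · intro a _ b _ hab
    refine disjoint_left.2 fun z hza hzb => hab ?_
    obtain ⟨x, hx, rfl⟩ := mem_image.1 hza
    obtain ⟨x', hx', hxx'⟩ := mem_image.1 hzb
    rw [mem_filter] at hx hx'
    rw [← hx.2, ← hx'.2, hk x hx.1, hk x' hx'.1, hxx']

end Finset

section
variable {V α ι : Type*} [DecidableEq V] [DecidableEq α]

theorem card_le_prod_card_image_restrict_rpow_s16 (e : ι → Finset V) (T : Finset ι) {y : ι → ℝ}
    (hy0 : ∀ i ∈ T, 0 ≤ y i) (U : Finset V) (hy : ∀ v ∈ U, 1 ≤ ∑ i ∈ T with v ∈ e i, y i)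
    (J : Finset (V → α)) (hJ : ∀ f ∈ J, ∀ g ∈ J, ∀ v ∉ U, f v = g v) :
    (#J : ℝ≥0∞) ≤ ∏ i ∈ T, (#(J.image (e i).restrict) : ℝ≥0∞) ^ y i := by
  induction U using Finset.induction_on generalizing J with
  | empty =>
    refine card_le_prod_card_image_rpow_of_card_le_one (card_le_one.2 fun f hf g hg => ?_) T _ hy0
    exact funext fun v => hJ f hf g hg v (notMem_empty v)
  | insert v U hv ih =>
    set Ω := J.image (· v)
    set fiber : α → Finset (V → α) := fun a => J.filter (· v = a)
    set P : ι → Finset (V → α) → ℝ≥0∞ := fun i K => #(K.image (e i).restrict)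
    have hfiber : ∀ a, (#(fiber a) : ℝ≥0∞) ≤ ∏ i ∈ T, P i (fiber a) ^ y i := by
      refine fun a => ih (fun w hw => hy w (mem_insert_of_mem hw)) _ fun f hf g hg w hw => ?_
      rw [mem_filter] at hf hg
      by_cases hwv : w = v
      · rw [hwv, hf.2, hg.2]
      · exact hJ f hf.1 g hg.1 w (by simp [hwv, hw])
    have hsplit : ∀ i, v ∈ e i → ∑ a ∈ Ω, P i (fiber a) ≤ P i J := fun i hvi => by
      simp only [P, fiber]
      exact_mod_cast sum_card_image_filter_le J (e i).restrict (· v) (· ⟨v, hvi⟩) (fun _ _ => rfl) Ω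
    have hmono : ∀ i a, P i (fiber a) ≤ P i J := fun i a => by
      simp only [P, fiber]
      exact_mod_cast card_le_card (image_subset_image (filter_subset _ _))
    calc (#J : ℝ≥0∞) = ∑ a ∈ Ω, (#(fiber a) : ℝ≥0∞) := mod_cast card_eq_sum_card_image _ J
      _ ≤ ∑ a ∈ Ω, ∏ i ∈ T, P i (fiber a) ^ y i := sum_le_sum fun a _ => hfiber a
      _ = ∑ a ∈ Ω, (∏ i ∈ T with v ∈ e i, P i (fiber a) ^ y i) *
            ∏ i ∈ T with v ∉ e i, P i (fiber a) ^ y i := by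
        simp only [prod_filter_mul_prod_filter_not]
      _ ≤ ∑ a ∈ Ω, (∏ i ∈ T with v ∈ e i, P i (fiber a) ^ y i) *
            ∏ i ∈ T with v ∉ e i, P i J ^ y i := by
        refine sum_le_sum fun a _ => mul_le_mul_right (prod_le_prod' fun i hi => ?_) _
        exact ENNReal.rpow_le_rpow (hmono i a) (hy0 i (mem_filter.1 hi).1)
      _ ≤ (∏ i ∈ T with v ∈ e i, P i J ^ y i) * ∏ i ∈ T with v ∉ e i, P i J ^ y i := by
        rw [← sum_mul]
        gcongr
        calc _ ≤ ∏ i ∈ T with v ∈ e i, (∑ a ∈ Ω, P i (fiber a)) ^ y i :=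
              ENNReal.sum_prod_rpow_le_prod_sum_rpow_of_one_le _ _ _ (hy v (mem_insert_self v U))
                fun i hi => hy0 i (mem_filter.1 hi).1
          _ ≤ _ := prod_le_prod' fun i hi =>
              ENNReal.rpow_le_rpow (hsplit i (mem_filter.1 hi).2) (hy0 i (mem_filter.1 hi).1)
      _ = ∏ i ∈ T, P i J ^ y i := prod_filter_mul_prod_filter_not _ _ _

end

section NaturalJoin

variable {V D ι : Type*} (e : ι → Finset V) (R : ∀ i, Finset (e i → D))

def naturalJoin (S : Finset ι) : Set (V → D) := {t | ∀ i ∈ S, (e i).restrict t ∈ R i}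

variable {e R}

theorem naturalJoin_anti {S S' : Finset ι} (h : S ⊆ S') :
    naturalJoin e R S' ⊆ naturalJoin e R S :=
  fun _ ht i hi => ht i (h hi)

theorem naturalJoin_finite {S : Finset ι} (hS : ∀ v, ∃ i ∈ S, v ∈ e i) :
    (naturalJoin e R S).Finite := by
  have hinj : Function.Injective fun (t : V → D) (i : S) => (e i).restrict t := by
    intro t t' h
    funext v
    obtain ⟨i, hi, hv⟩ := hS v
    exact congrFun (congrFun h ⟨i, hi⟩) ⟨v, hv⟩
  exact ((Set.Finite.pi' (ι := S) fun i => (R i).finite_toSet).preimage hinj.injOn).subset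
    fun t ht i => ht i i.2

variable [DecidableEq V]

theorem ncard_naturalJoin_le {S : Finset ι} {y : ι → ℝ} (hy0 : ∀ i ∈ S, 0 ≤ y i)
    (hy : ∀ v, 1 ≤ ∑ i ∈ S with v ∈ e i, y i) :
    (naturalJoin e R S).Finite ∧
      ((naturalJoin e R S).ncard : ℝ) ≤ ∏ i ∈ S, (#(R i) : ℝ) ^ y i := by
  classical
  have hS : ∀ v, ∃ i ∈ S, v ∈ e i := fun v => by
    obtain ⟨i, hi, -⟩ := exists_ne_zero_of_sum_ne_zero (zero_lt_one.trans_le (hy v)).ne'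
    exact ⟨i, (mem_filter.1 hi).1, (mem_filter.1 hi).2⟩
  have hfin := naturalJoin_finite (R := R) hS
  refine ⟨hfin, ?_⟩
  have hAGM := card_le_prod_card_image_restrict_rpow_s16 e S hy0 (S.biUnion e)
    (fun v _ => hy v) hfin.toFinset fun f _ g _ v hv => absurd (mem_biUnion.2 (hS v)) hv
  have hR : ∀ i ∈ S, #(hfin.toFinset.image (e i).restrict) ≤ #(R i) := fun i hi =>
    card_le_card fun _ hx => by
      obtain ⟨t, ht, rfl⟩ := mem_image.1 hx
      exact (hfin.mem_toFinset.1 ht) i hi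
  have hENN : ((naturalJoin e R S).ncard : ℝ≥0∞) ≤ ∏ i ∈ S, (#(R i) : ℝ≥0∞) ^ y i := by
    rw [Set.ncard_eq_toFinset_card _ hfin]
    exact hAGM.trans (prod_le_prod' fun i hi => ENNReal.rpow_le_rpow (mod_cast hR i hi) (hy0 i hi))
  have hfinite : ∏ i ∈ S, (#(R i) : ℝ≥0∞) ^ y i ≠ ⊤ :=
    ENNReal.prod_ne_top fun i hi =>
      ENNReal.rpow_ne_top_of_nonneg (hy0 i hi) (ENNReal.natCast_ne_top _)
  simpa [ENNReal.toReal_prod, ← ENNReal.toReal_rpow] using ENNReal.toReal_mono hfinite hENN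

end NaturalJoin

theorem relaxed_join_refined_upper_bound_general
    {V D : Type*} [DecidableEq V]
    {ι : Type*} [Fintype ι] [DecidableEq ι]
    (e : ι → Finset V) (R : ∀ i, Finset ({v // v ∈ e i} → D))
    (𝒞 : Finset (Finset ι))
    (Chat : Finset (Finset ι))
    (hChat : Chat = 𝒞.filter (fun S => ∀ T ∈ 𝒞, T ⊆ S → T = S))
    (T : Finset ι → Finset ι)
    (hTsub : ∀ S ∈ Chat, T S ⊆ S)
    (y : Finset ι → ι → ℝ)
    (hy0 : ∀ S ∈ Chat, ∀ i ∈ T S, 0 ≤ y (T S) i)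
    (hycover : ∀ S ∈ Chat, ∀ v : V,
      1 ≤ ∑ i ∈ (T S).filter (fun i => v ∈ e i), y (T S) i)
    (qr : Set (V → D))
    (hqr : qr = ⋃ S ∈ 𝒞,
      {t : V → D | ∀ i ∈ S, (fun v : {v // v ∈ e i} => t v) ∈ R i}) :
    qr.Finite ∧
    (Nat.card qr : ℝ) ≤ ∑ T' ∈ Chat.image T, ∏ i ∈ T', ((R i).card : ℝ) ^ y T' i := by
  have hbound : ∀ T' ∈ Chat.image T, (naturalJoin e R T').Finite ∧
      ((naturalJoin e R T').ncard : ℝ) ≤ ∏ i ∈ T', (#(R i) : ℝ) ^ y T' i := by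
    simp only [mem_image, forall_exists_index, and_imp, forall_apply_eq_imp_iff₂]
    exact fun S hS => ncard_naturalJoin_le (hy0 S hS) (hycover S hS)
  have hcover : qr ⊆ ⋃ T' ∈ Chat.image T, naturalJoin e R T' := by
    rw [hqr]
    refine Set.iUnion₂_subset fun S hS => ?_
    obtain ⟨S', hS'S, hmin⟩ := exists_minimal_le_of_wellFoundedLT (· ∈ 𝒞) S hS
    have hS' : S' ∈ Chat := hChat ▸ mem_filter.2 ⟨hmin.prop, fun S'' h h' => hmin.eq_of_le h h'⟩
    exact (naturalJoin_anti ((hTsub S' hS').trans hS'S)).trans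
      (Set.subset_biUnion_of_mem (u := naturalJoin e R) (mem_coe.2 (mem_image_of_mem T hS')))
  have hfin : (⋃ T' ∈ Chat.image T, naturalJoin e R T').Finite :=
    (Chat.image T).finite_toSet.biUnion fun T' hT' => (hbound T' hT').1
  refine ⟨hfin.subset hcover, ?_⟩
  calc (Nat.card qr : ℝ) ≤ (⋃ T' ∈ Chat.image T, naturalJoin e R T').ncard := by
        rw [Nat.card_coe_set_eq]
        exact_mod_cast Set.ncard_le_ncard hcover hfin
    _ ≤ ∑ T' ∈ Chat.image T, ((naturalJoin e R T').ncard : ℝ) :=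
        mod_cast (Chat.image T).set_ncard_biUnion_le _
    _ ≤ _ := sum_le_sum fun T' hT' => (hbound T' hT').2

/-- **Refined upper bound on the relaxed join** (Theorem 6.7, size bound).
Setting as in Proposition 6.6: `𝒞` is the family of subsets `S` of the edges
with `|S| ≥ m − r` covering `V`, `Chat` its set of inclusion-minimal elements,
and `qr` the relaxed join.  For each `S ∈ Chat` we are given `T S ⊆ S` covering
`V` together with a fractional edge cover `y (T S)` of `(V, T S)`; the cover
depends only on `T S` (so whenever `T S = T S'` the associated covers agree).
Then `|qr| ≤ ∑_{T'} ∏_{i ∈ T'} |R i| ^ (y T' i)`, the sum ranging over the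
distinct sets `T' ∈ {T S : S ∈ Chat}`. -/
theorem relaxed_join_refined_upper_bound
    {V D : Type*} [Fintype V] [DecidableEq V]
    {ι : Type*} [Fintype ι] [DecidableEq ι]
    (e : ι → Finset V) (R : ∀ i, Finset ({v // v ∈ e i} → D))
    (m r : ℕ) (hm : m = Fintype.card ι) (hr : r ≤ m)
    (𝒞 : Finset (Finset ι))
    (h𝒞 : 𝒞 = Finset.univ.filter
      (fun S : Finset ι => m - r ≤ S.card ∧ ∀ v : V, ∃ i ∈ S, v ∈ e i))
    (Chat : Finset (Finset ι))
    (hChat : Chat = 𝒞.filter (fun S => ∀ T ∈ 𝒞, T ⊆ S → T = S))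
    (T : Finset ι → Finset ι)
    (hTsub : ∀ S ∈ Chat, T S ⊆ S)
    (hTcover : ∀ S ∈ Chat, ∀ v : V, ∃ i ∈ T S, v ∈ e i)
    (y : Finset ι → ι → ℝ)
    (hy0 : ∀ S ∈ Chat, ∀ i ∈ T S, 0 ≤ y (T S) i)
    (hycover : ∀ S ∈ Chat, ∀ v : V,
      1 ≤ ∑ i ∈ (T S).filter (fun i => v ∈ e i), y (T S) i)
    (qr : Set (V → D))
    (hqr : qr = ⋃ S ∈ 𝒞,
      {t : V → D | ∀ i ∈ S, (fun v : {v // v ∈ e i} => t v) ∈ R i}) :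
    qr.Finite ∧
    (Nat.card qr : ℝ) ≤ ∑ T' ∈ Chat.image T, ∏ i ∈ T', ((R i).card : ℝ) ^ y T' i :=
  relaxed_join_refined_upper_bound_general e R 𝒞 Chat hChat T hTsub y hy0 hycover qr hqr
end
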